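/- arXiv:1412.2017 — 8 statements merged into one kernel-verified Lean document; each statement's English description precedes it below -/
import Mathlib

section
/- Let m, n, N be positive integers and let q, q(1), ..., q(N) ∈ [1, ∞)^m be exponent vectors such that there exist θ_1, ..., θ_N ≥ 0 with θ_1 + ... + θ_N = 1 and 1/q_j = Σ_{k=1}^N θ_k / q_j(k) for each j ∈ {1,...,m} (i.e., (1/q_1,...,1/q_m) lies in the convex hull of the points (1/q_1(k),...,1/q_m(k))). Then for every scalar matrix a = (a_i)_{i ∈ M(m,n)} one has ‖a‖_q ≤ ∏_{k=1}^N ‖a‖_{q(k)}^{θ_k}. -/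
/-!
The exponents are peeled off one coordinate at a time. Fixing the first index `i`, induction on
`m` bounds the inner mixed norm `b i` by `∏ k, c k i ^ θ k`, where `c k i` are the inner
`Q k`-norms. It remains to bound the `ℓ^{q₀}` norm of `i ↦ ∏ k, c k i ^ θ k` by
`∏ k, ‖c k‖_{ℓ^{Q k 0}} ^ θ k`, which is Hölder's inequality for the functions `c k ^ Q k 0` with
the weights `θ k q₀ / Q k 0`; these sum to one precisely because
`1 / q₀ = ∑ k, θ k / Q k 0`.
-/

open scoped BigOperators

/-- The mixed norm `‖a‖_q` of a scalar matrix `a = (a_i)_{i ∈ {1,…,n}^m}` with respect to an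
exponent vector `q ∈ [1,∞)^m`, defined iteratively:
`‖a‖_q = (Σ_{i_1=1}^n ( … ( Σ_{i_m=1}^n |a_i|^{q_m} )^{q_{m-1}/q_m} … )^{q_1/q_2})^{1/q_1}`. -/
noncomputable def mixedNorm {𝕂 : Type*} [RCLike 𝕂] {n : ℕ} :
    {m : ℕ} → (Fin m → ℝ) → ((Fin m → Fin n) → 𝕂) → ℝ
  | 0, _, a => ‖a Fin.elim0‖
  | _ + 1, q, a =>
      (∑ i : Fin n,
          (mixedNorm (fun j => q j.succ) (fun v => a (Fin.cons i v))) ^ (q 0)) ^ (1 / q 0)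

open MeasureTheory Finset

theorem Real.sum_prod_rpow_le_prod_sum_rpow {ι κ : Type*} (s : Finset ι) (t : Finset κ)
    {w : κ → ℝ} {g : κ → ι → ℝ} (hw : ∀ k ∈ t, 0 ≤ w k) (hw1 : ∑ k ∈ t, w k = 1)
    (hg : ∀ k ∈ t, ∀ i ∈ s, 0 ≤ g k i) :
    ∑ i ∈ s, ∏ k ∈ t, g k i ^ w k ≤ ∏ k ∈ t, (∑ i ∈ s, g k i) ^ w k := by
  -- Hölder for several functions in `lintegral`, for the counting measure on `s`
  let : MeasurableSpace ι := ⊤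
  have hsum (f : ι → ENNReal) : ∫⁻ i in s, f i ∂Measure.count = ∑ i ∈ s, f i := by
    simp [lintegral_finset]
  have key := ENNReal.lintegral_prod_norm_pow_le (μ := Measure.count.restrict s) t
    (f := fun k i => ENNReal.ofReal (g k i)) (fun _ _ => measurable_from_top.aemeasurable) hw1 hw
  simp only [hsum] at key
  have hS : ∀ k ∈ t, 0 ≤ ∑ i ∈ s, g k i := fun k hk => sum_nonneg (hg k hk)
  rw [← ENNReal.ofReal_le_ofReal_iff (prod_nonneg fun k hk => Real.rpow_nonneg (hS k hk) _),
    ENNReal.ofReal_sum_of_nonneg fun i hi =>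
      prod_nonneg fun k hk => Real.rpow_nonneg (hg k hk i hi) _,
    ENNReal.ofReal_prod_of_nonneg fun k hk => Real.rpow_nonneg (hS k hk) _]
  convert key using 1
  · refine sum_congr rfl fun i hi => ?_
    rw [ENNReal.ofReal_prod_of_nonneg fun k hk => Real.rpow_nonneg (hg k hk i hi) _]
    exact prod_congr rfl fun k hk => (ENNReal.ofReal_rpow_of_nonneg (hg k hk i hi) (hw k hk)).symm
  · refine prod_congr rfl fun k hk => ?_
    rw [← ENNReal.ofReal_rpow_of_nonneg (hS k hk) (hw k hk), ENNReal.ofReal_sum_of_nonneg (hg k hk)]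

theorem Real.Lp_prod_rpow_le_prod_Lp_rpow {ι κ : Type*} (s : Finset ι) (t : Finset κ)
    {θ P : κ → ℝ} {p : ℝ} {c : κ → ι → ℝ} (hθ : ∀ k ∈ t, 0 ≤ θ k) (hp : 0 < p)
    (hP : ∀ k ∈ t, 0 < P k) (hpP : 1 / p = ∑ k ∈ t, θ k / P k)
    (hc : ∀ k ∈ t, ∀ i ∈ s, 0 ≤ c k i) :
    (∑ i ∈ s, (∏ k ∈ t, c k i ^ θ k) ^ p) ^ (1 / p) ≤
      ∏ k ∈ t, ((∑ i ∈ s, c k i ^ P k) ^ (1 / P k)) ^ θ k := by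
  -- `hpP` says that the weights `θ k * p / P k` sum to one
  set w : κ → ℝ := fun k => θ k * p / P k
  have hw : ∀ k ∈ t, 0 ≤ w k := fun k hk => by have := hθ k hk; have := hP k hk; positivity
  have hw1 : ∑ k ∈ t, w k = 1 := by
    rw [← div_self hp.ne', div_eq_mul_one_div p p, hpP, mul_sum]
    exact sum_congr rfl fun k _ => by ring
  have hS : ∀ k ∈ t, 0 ≤ ∑ i ∈ s, c k i ^ P k :=
    fun k hk => sum_nonneg fun i hi => Real.rpow_nonneg (hc k hk i hi) _
  have hpow : ∀ i ∈ s, (∏ k ∈ t, c k i ^ θ k) ^ p = ∏ k ∈ t, (c k i ^ P k) ^ w k := by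
    intro i hi
    rw [← Real.finsetProd_rpow _ _ fun k hk => Real.rpow_nonneg (hc k hk i hi) _]
    refine prod_congr rfl fun k hk => ?_
    rw [← Real.rpow_mul (hc k hk i hi), ← Real.rpow_mul (hc k hk i hi)]
    congr 1
    simp only [w]; field_simp [(hP k hk).ne']
  calc (∑ i ∈ s, (∏ k ∈ t, c k i ^ θ k) ^ p) ^ (1 / p)
      = (∑ i ∈ s, ∏ k ∈ t, (c k i ^ P k) ^ w k) ^ (1 / p) := by rw [sum_congr rfl hpow]
    _ ≤ (∏ k ∈ t, (∑ i ∈ s, c k i ^ P k) ^ w k) ^ (1 / p) := by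
      gcongr
      · exact sum_nonneg fun i hi => prod_nonneg fun k hk =>
          Real.rpow_nonneg (Real.rpow_nonneg (hc k hk i hi) _) _
      · exact Real.sum_prod_rpow_le_prod_sum_rpow s t hw hw1
          fun k hk i hi => Real.rpow_nonneg (hc k hk i hi) _
    _ = ∏ k ∈ t, ((∑ i ∈ s, c k i ^ P k) ^ (1 / P k)) ^ θ k := by
      rw [← Real.finsetProd_rpow _ _ fun k hk => Real.rpow_nonneg (hS k hk) _]
      refine prod_congr rfl fun k hk => ?_
      rw [← Real.rpow_mul (hS k hk), ← Real.rpow_mul (hS k hk)]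
      congr 1
      simp only [w]; field_simp [(hP k hk).ne']

theorem mixedNorm_nonneg {𝕂 : Type*} [RCLike 𝕂] {n : ℕ} :
    ∀ {m : ℕ} (q : Fin m → ℝ) (a : (Fin m → Fin n) → 𝕂), 0 ≤ mixedNorm q a
  | 0, _, _ => norm_nonneg _
  | _ + 1, _, _ =>
    Real.rpow_nonneg (sum_nonneg fun _ _ => Real.rpow_nonneg (mixedNorm_nonneg _ _) _) _

theorem mixedNorm_le_prod_rpow {𝕂 : Type*} [RCLike 𝕂] {n : ℕ} {κ : Type*} [Fintype κ]
    {θ : κ → ℝ} (hθ : ∀ k, 0 ≤ θ k) (hθ1 : ∑ k, θ k = 1) :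
    ∀ {m : ℕ} (q : Fin m → ℝ) (Q : κ → Fin m → ℝ), (∀ j, 0 < q j) → (∀ k j, 0 < Q k j) →
      (∀ j, 1 / q j = ∑ k, θ k / Q k j) → ∀ a : (Fin m → Fin n) → 𝕂,
      mixedNorm q a ≤ ∏ k, mixedNorm (Q k) a ^ θ k
  | 0, q, Q, _, _, _, a => by
    calc mixedNorm q a = ‖a Fin.elim0‖ ^ ∑ k, θ k := by rw [hθ1, Real.rpow_one]; rfl
      _ ≤ ∏ k, mixedNorm (Q k) a ^ θ k :=
        (Real.rpow_sum_of_nonneg (norm_nonneg _) fun k _ => hθ k).le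
  | m + 1, q, Q, hq, hQ, hqQ, a => by
    set b : Fin n → ℝ := fun i => mixedNorm (fun j => q j.succ) (fun v => a (Fin.cons i v))
    set c : κ → Fin n → ℝ :=
      fun k i => mixedNorm (fun j => Q k j.succ) (fun v => a (Fin.cons i v))
    have hrow : ∀ i, b i ≤ ∏ k, c k i ^ θ k := fun i =>
      mixedNorm_le_prod_rpow hθ hθ1 _ _ (fun j => hq j.succ) (fun k j => hQ k j.succ)
        (fun j => hqQ j.succ) _
    calc mixedNorm q a = (∑ i, b i ^ q 0) ^ (1 / q 0) := rfl
      _ ≤ (∑ i, (∏ k, c k i ^ θ k) ^ q 0) ^ (1 / q 0) := by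
        have := hq 0
        gcongr with i
        · exact sum_nonneg fun i _ => Real.rpow_nonneg (mixedNorm_nonneg _ _) _
        · exact mixedNorm_nonneg _ _
        · exact hrow i
      _ ≤ ∏ k, ((∑ i, c k i ^ Q k 0) ^ (1 / Q k 0)) ^ θ k :=
        Real.Lp_prod_rpow_le_prod_Lp_rpow _ _ (fun k _ => hθ k) (hq 0) (fun k _ => hQ k 0)
          (hqQ 0) fun _ _ _ _ => mixedNorm_nonneg _ _
      _ = ∏ k, mixedNorm (Q k) a ^ θ k := rfl

theorem holder_interpolative_general {𝕂 : Type*} [RCLike 𝕂] (m n N : ℕ) (q : Fin m → ℝ)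
    (Q : Fin N → Fin m → ℝ)
    (hq : ∀ j, 1 ≤ q j) (hQ : ∀ k j, 1 ≤ Q k j)
    (θ : Fin N → ℝ) (hθ : ∀ k, 0 ≤ θ k) (hθ1 : ∑ k : Fin N, θ k = 1)
    (hconv : ∀ j, 1 / q j = ∑ k : Fin N, θ k / Q k j)
    (a : (Fin m → Fin n) → 𝕂) :
    mixedNorm q a ≤ ∏ k : Fin N, mixedNorm (Q k) a ^ θ k :=
  mixedNorm_le_prod_rpow hθ hθ1 q Q (fun j => one_pos.trans_le (hq j))
    (fun k j => one_pos.trans_le (hQ k j)) hconv a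

/-- **Hölder's inequality for multiple exponents (interpolative approach)**.
If `(1/q_1, …, 1/q_m)` lies in the convex hull of the points `(1/q_1(k), …, 1/q_m(k))`,
`k = 1, …, N`, with convex coefficients `θ_1, …, θ_N`, then
`‖a‖_q ≤ ∏_{k=1}^N ‖a‖_{q(k)}^{θ_k}` for every scalar matrix `a`. -/
theorem holder_interpolative {𝕂 : Type*} [RCLike 𝕂] (m n N : ℕ) (hm : 0 < m) (hn : 0 < n)
    (hN : 0 < N) (q : Fin m → ℝ) (Q : Fin N → Fin m → ℝ)
    (hq : ∀ j, 1 ≤ q j) (hQ : ∀ k j, 1 ≤ Q k j)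
    (θ : Fin N → ℝ) (hθ : ∀ k, 0 ≤ θ k) (hθ1 : ∑ k : Fin N, θ k = 1)
    (hconv : ∀ j, 1 / q j = ∑ k : Fin N, θ k / Q k j)
    (a : (Fin m → Fin n) → 𝕂) :
    mixedNorm q a ≤ ∏ k : Fin N, mixedNorm (Q k) a ^ θ k :=
  holder_interpolative_general m n N q Q hq hQ θ hθ hθ1 hconv a
end

section
/- (Blei's inequality) Let A and B be finite non-void index sets and let (a_{ij})_{(i,j) ∈ A×B} be a matrix of nonnegative real numbers; denote its columns by α_j = (a_{ij})_{i ∈ A} and its rows by β_i = (a_{ij})_{j ∈ B}. Let q, s_1, s_2 ≥ 1 with q > max(s_1, s_2), and define w(x,y) = (q²(x+y) − 2qxy)/(q² − xy) and f(x,y) = (q²x − qxy)/(q²(x+y) − 2qxy). Then (Σ_{(i,j) ∈ A×B} a_{ij}^{w(s_1,s_2)})^{1/w(s_1,s_2)} ≤ (Σ_{i ∈ A} ‖β_i‖_q^{s_1})^{f(s_1,s_2)/s_1} · (Σ_{j ∈ B} ‖α_j‖_q^{s_2})^{f(s_2,s_1)/s_2}. -/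
open scoped BigOperators

/-- `w(x,y) = (q²(x+y) − 2qxy)/(q² − xy)`. -/
noncomputable def bleiW (q x y : ℝ) : ℝ := (q ^ 2 * (x + y) - 2 * q * x * y) / (q ^ 2 - x * y)

/-- `f(x,y) = (q²x − qxy)/(q²(x+y) − 2qxy)`. -/
noncomputable def bleiF (q x y : ℝ) : ℝ :=
  (q ^ 2 * x - q * x * y) / (q ^ 2 * (x + y) - 2 * q * x * y)

/-! Let `u₁ = bleiU q s₁ s₂` and `u₂ = bleiU q s₂ s₁`, the positive solution of
`u₁/q + u₂/s₂ = 1`, `u₁/s₁ + u₂/q = 1`; then `w(s₁,s₂) = u₁ + u₂`, `f(s₁,s₂) = u₁/w` and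
`f(s₂,s₁) = u₂/w`. Split `a^w = a^{u₁} a^{u₂}` and apply Hölder twice: along each row `β_i`
with weights `u₁/q, u₂/s₂`, then over `i` with weights `u₁/s₁, u₂/q`. This bounds `Σ a^w` by
`(Σ_i ‖β_i‖_q^{s₁})^{u₁/s₁} (Σ_i ‖β_i‖_{s₂}^q)^{u₂/q}`. Since `q/s₂ ≥ 1`, Minkowski's
inequality in `ℓ^{q/s₂}` swaps the mixed norm in the second factor, bounding it by
`(Σ_j ‖α_j‖_q^{s₂})^{u₂/s₂}`. -/

open Finset Real

theorem sum_rpow_mul_rpow_le {ι : Type*} (s : Finset ι) {f g : ι → ℝ}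
    (hf : ∀ i ∈ s, 0 ≤ f i) (hg : ∀ i ∈ s, 0 ≤ g i) {θ₁ θ₂ : ℝ}
    (hθ₁ : 0 < θ₁) (hθ₂ : 0 < θ₂) (hθ : θ₁ + θ₂ = 1) :
    ∑ i ∈ s, f i ^ θ₁ * g i ^ θ₂ ≤ (∑ i ∈ s, f i) ^ θ₁ * (∑ i ∈ s, g i) ^ θ₂ := by
  have holder := inner_le_Lp_mul_Lq_of_nonneg s (HolderConjugate.inv_inv hθ₁ hθ₂ hθ)
    (fun i hi => rpow_nonneg (hf i hi) θ₁) (fun i hi => rpow_nonneg (hg i hi) θ₂)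
  have cancel : ∀ {x θ : ℝ}, 0 ≤ x → 0 < θ → (x ^ θ) ^ θ⁻¹ = x := fun hx hθ =>
    rpow_rpow_inv hx hθ.ne'
  simpa only [one_div, inv_inv, sum_congr rfl fun i hi => cancel (hf i hi) hθ₁,
    sum_congr rfl fun i hi => cancel (hg i hi) hθ₂] using holder

theorem Lp_sum_le_sum_Lp {ι κ : Type*} (s : Finset ι) (t : Finset κ) {y : ι → κ → ℝ}
    (hy : ∀ i j, 0 ≤ y i j) {p : ℝ} (hp : 1 ≤ p) :
    (∑ i ∈ s, (∑ j ∈ t, y i j) ^ p) ^ (1 / p) ≤ ∑ j ∈ t, (∑ i ∈ s, y i j ^ p) ^ (1 / p) := by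
  classical
  induction t using Finset.induction_on with
  | empty => simp [zero_rpow (by positivity : p ≠ 0), zero_rpow (by positivity : p⁻¹ ≠ 0)]
  | insert j t hj ih =>
    simp only [sum_insert hj]
    calc (∑ i ∈ s, (y i j + ∑ k ∈ t, y i k) ^ p) ^ (1 / p)
        ≤ (∑ i ∈ s, y i j ^ p) ^ (1 / p) + (∑ i ∈ s, (∑ k ∈ t, y i k) ^ p) ^ (1 / p) :=
          Lp_add_le_of_nonneg s hp (fun i _ => hy i j) fun i _ => sum_nonneg fun k _ => hy i k
      _ ≤ _ := add_le_add_right ih _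

theorem sum_sum_rpow_rpow_le_sum_sum_rpow_rpow {ι κ : Type*} (s : Finset ι) (t : Finset κ)
    {b : ι → κ → ℝ} (hb : ∀ i j, 0 ≤ b i j) {p q : ℝ} (hp : 0 < p) (hpq : p ≤ q) :
    ∑ i ∈ s, (∑ j ∈ t, b i j ^ p) ^ (q / p) ≤
      (∑ j ∈ t, (∑ i ∈ s, b i j ^ q) ^ (p / q)) ^ (q / p) := by
  have hqp : 0 < q / p := div_pos (hp.trans_le hpq) hp
  have minkowski := Lp_sum_le_sum_Lp s t (fun i j => rpow_nonneg (hb i j) p)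
    ((one_le_div hp).2 hpq)
  have hpow : ∀ i j, (b i j ^ p) ^ (q / p) = b i j ^ q := fun i j => by
    rw [← rpow_mul (hb i j), mul_div_cancel₀ q hp.ne']
  simp only [hpow, one_div, inv_div] at minkowski
  rwa [← rpow_inv_le_iff_of_pos (sum_nonneg fun i _ => rpow_nonneg (sum_nonneg fun j _ =>
    rpow_nonneg (hb i j) p) _) (sum_nonneg fun j _ => rpow_nonneg
    (sum_nonneg fun i _ => rpow_nonneg (hb i j) q) _) hqp, inv_div]

theorem sum_sum_rpow_add_le {A B : Type*} [Fintype A] [Fintype B] {a : A → B → ℝ}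
    (ha : ∀ i j, 0 ≤ a i j) {q s₁ s₂ u₁ u₂ : ℝ} (hs₁ : 0 < s₁) (hs₂ : 0 < s₂) (hs₂q : s₂ ≤ q)
    (hu₁ : 0 < u₁) (hu₂ : 0 < u₂) (h₁ : u₁ / q + u₂ / s₂ = 1) (h₂ : u₁ / s₁ + u₂ / q = 1) :
    ∑ i, ∑ j, a i j ^ (u₁ + u₂) ≤
      (∑ i, (∑ j, a i j ^ q) ^ (s₁ / q)) ^ (u₁ / s₁) *
        (∑ j, (∑ i, a i j ^ q) ^ (s₂ / q)) ^ (u₂ / s₂) := by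
  have hq : 0 < q := hs₂.trans_le hs₂q
  have hrow : ∀ {r : ℝ} i, 0 ≤ ∑ j, a i j ^ r := fun i =>
    sum_nonneg fun j _ => rpow_nonneg (ha i j) _
  have hcol : ∀ {r : ℝ} j, 0 ≤ ∑ i, a i j ^ r := fun j =>
    sum_nonneg fun i _ => rpow_nonneg (ha i j) _
  have hpow : ∀ {x r t : ℝ}, 0 ≤ x → r ≠ 0 → (x ^ r) ^ (t / r) = x ^ t := fun hx hr => by
    rw [← rpow_mul hx, mul_div_cancel₀ _ hr]
  calc ∑ i, ∑ j, a i j ^ (u₁ + u₂)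
      = ∑ i, ∑ j, (a i j ^ q) ^ (u₁ / q) * (a i j ^ s₂) ^ (u₂ / s₂) := by
        simp only [hpow (ha _ _) hq.ne', hpow (ha _ _) hs₂.ne',
          rpow_add' (ha _ _) (add_pos hu₁ hu₂).ne']
    _ ≤ ∑ i, (∑ j, a i j ^ q) ^ (u₁ / q) * (∑ j, a i j ^ s₂) ^ (u₂ / s₂) :=
        sum_le_sum fun i _ => sum_rpow_mul_rpow_le _ (fun j _ => rpow_nonneg (ha i j) q)
          (fun j _ => rpow_nonneg (ha i j) s₂) (by positivity) (by positivity) h₁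
    _ = ∑ i, ((∑ j, a i j ^ q) ^ (s₁ / q)) ^ (u₁ / s₁) *
          ((∑ j, a i j ^ s₂) ^ (q / s₂)) ^ (u₂ / q) := by
        simp only [← rpow_mul (hrow _)]
        congr! 3 <;> field_simp
    _ ≤ (∑ i, (∑ j, a i j ^ q) ^ (s₁ / q)) ^ (u₁ / s₁) *
          (∑ i, (∑ j, a i j ^ s₂) ^ (q / s₂)) ^ (u₂ / q) :=
        sum_rpow_mul_rpow_le _ (fun i _ => rpow_nonneg (hrow i) _)
          (fun i _ => rpow_nonneg (hrow i) _) (by positivity) (by positivity) h₂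
    _ ≤ (∑ i, (∑ j, a i j ^ q) ^ (s₁ / q)) ^ (u₁ / s₁) *
          ((∑ j, (∑ i, a i j ^ q) ^ (s₂ / q)) ^ (q / s₂)) ^ (u₂ / q) := by
        refine mul_le_mul_of_nonneg_left (rpow_le_rpow ?_ ?_ (by positivity)) ?_
        · exact sum_nonneg fun i _ => rpow_nonneg (hrow i) _
        · exact sum_sum_rpow_rpow_le_sum_sum_rpow_rpow _ _ ha hs₂ hs₂q
        · exact rpow_nonneg (sum_nonneg fun i _ => rpow_nonneg (hrow i) _) _
    _ = _ := by
        rw [← rpow_mul (sum_nonneg fun j _ => rpow_nonneg (hcol j) _)]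
        congr 2
        field_simp

theorem rpow_one_div_sum_sum_rpow_add_le {A B : Type*} [Fintype A] [Fintype B] {a : A → B → ℝ}
    (ha : ∀ i j, 0 ≤ a i j) {q s₁ s₂ u₁ u₂ : ℝ} (hs₁ : 0 < s₁) (hs₂ : 0 < s₂) (hs₂q : s₂ ≤ q)
    (hu₁ : 0 < u₁) (hu₂ : 0 < u₂) (h₁ : u₁ / q + u₂ / s₂ = 1) (h₂ : u₁ / s₁ + u₂ / q = 1) :
    (∑ i, ∑ j, a i j ^ (u₁ + u₂)) ^ (1 / (u₁ + u₂)) ≤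
      (∑ i, ((∑ j, |a i j| ^ q) ^ (1 / q)) ^ s₁) ^ (u₁ / (u₁ + u₂) / s₁) *
        (∑ j, ((∑ i, |a i j| ^ q) ^ (1 / q)) ^ s₂) ^ (u₂ / (u₁ + u₂) / s₂) := by
  have hrow : ∀ {r : ℝ} i, 0 ≤ ∑ j, a i j ^ r := fun i =>
    sum_nonneg fun j _ => rpow_nonneg (ha i j) _
  have hcol : ∀ {r : ℝ} j, 0 ≤ ∑ i, a i j ^ r := fun j =>
    sum_nonneg fun i _ => rpow_nonneg (ha i j) _
  simp only [abs_of_nonneg (ha _ _), ← rpow_mul (hrow _), ← rpow_mul (hcol _), one_div_mul_eq_div]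
  have hX : 0 ≤ ∑ i, (∑ j, a i j ^ q) ^ (s₁ / q) := sum_nonneg fun i _ => rpow_nonneg (hrow i) _
  have hZ : 0 ≤ ∑ j, (∑ i, a i j ^ q) ^ (s₂ / q) := sum_nonneg fun j _ => rpow_nonneg (hcol j) _
  calc (∑ i, ∑ j, a i j ^ (u₁ + u₂)) ^ (1 / (u₁ + u₂))
      ≤ ((∑ i, (∑ j, a i j ^ q) ^ (s₁ / q)) ^ (u₁ / s₁) *
          (∑ j, (∑ i, a i j ^ q) ^ (s₂ / q)) ^ (u₂ / s₂)) ^ (1 / (u₁ + u₂)) :=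
        rpow_le_rpow (sum_nonneg fun i _ => hrow i)
          (sum_sum_rpow_add_le ha hs₁ hs₂ hs₂q hu₁ hu₂ h₁ h₂) (by positivity)
    _ = _ := by
        rw [mul_rpow (rpow_nonneg hX _) (rpow_nonneg hZ _), ← rpow_mul hX, ← rpow_mul hZ]
        ring_nf

noncomputable def bleiU (q x y : ℝ) : ℝ := q * x * (q - y) / (q ^ 2 - x * y)

theorem bleiU_pos {q x y : ℝ} (hx : 0 < x) (hxq : x < q) (hyq : y < q) : 0 < bleiU q x y := by
  have hq : 0 < q := hx.trans hxq
  have hxy : x * y < q ^ 2 := by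
    rcases le_or_gt y 0 with hy | hy <;> nlinarith
  exact div_pos (by positivity) (by linarith)

theorem bleiW_comm (q x y : ℝ) : bleiW q x y = bleiW q y x := by
  unfold bleiW; ring

theorem bleiW_eq_bleiU_add (q x y : ℝ) : bleiW q x y = bleiU q x y + bleiU q y x := by
  unfold bleiW bleiU
  ring

theorem bleiF_eq_bleiU_div_bleiW {q x y : ℝ} (h : q ^ 2 - x * y ≠ 0) :
    bleiF q x y = bleiU q x y / bleiW q x y := by
  unfold bleiF bleiU bleiW
  rw [div_div_div_cancel_right₀ h]
  ring

theorem bleiU_div_add_bleiU_div {q x y : ℝ} (hq : q ≠ 0) (hy : y ≠ 0) (h : q ^ 2 - x * y ≠ 0) :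
    bleiU q x y / q + bleiU q y x / y = 1 := by
  unfold bleiU
  rw [mul_comm y x]
  field_simp
  ring

theorem blei_inequality_general {A B : Type*} [Fintype A] [Fintype B]
    (a : A → B → ℝ) (ha : ∀ i j, 0 ≤ a i j) (q s₁ s₂ : ℝ)
    (hs₁ : 1 ≤ s₁) (hs₂ : 1 ≤ s₂) (hq : max s₁ s₂ < q) :
    (∑ i : A, ∑ j : B, a i j ^ bleiW q s₁ s₂) ^ (1 / bleiW q s₁ s₂) ≤
      (∑ i : A, ((∑ j : B, |a i j| ^ q) ^ (1 / q)) ^ s₁) ^ (bleiF q s₁ s₂ / s₁) *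
        (∑ j : B, ((∑ i : A, |a i j| ^ q) ^ (1 / q)) ^ s₂) ^ (bleiF q s₂ s₁ / s₂) := by
  obtain ⟨hs₁q, hs₂q⟩ := max_lt_iff.1 hq
  have hs₁₀ : 0 < s₁ := by linarith
  have hs₂₀ : 0 < s₂ := by linarith
  have hE : q ^ 2 - s₁ * s₂ ≠ 0 := by nlinarith
  have hE' : q ^ 2 - s₂ * s₁ ≠ 0 := by rwa [mul_comm]
  rw [bleiF_eq_bleiU_div_bleiW hE, bleiF_eq_bleiU_div_bleiW hE', bleiW_comm q s₂ s₁,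
    bleiW_eq_bleiU_add]
  exact rpow_one_div_sum_sum_rpow_add_le ha hs₁₀ hs₂₀ hs₂q.le (bleiU_pos hs₁₀ hs₁q hs₂q)
    (bleiU_pos hs₂₀ hs₂q hs₁q) (bleiU_div_add_bleiU_div (by linarith) hs₂₀.ne' hE)
    (by rw [add_comm]; exact bleiU_div_add_bleiU_div (by linarith) hs₁₀.ne' hE')

/-- **Blei's inequality.** For finite nonempty index sets `A`, `B`, a matrix
`(a_{ij})` of nonnegative reals, and `q, s₁, s₂ ≥ 1` with `q > max(s₁, s₂)`,
`(Σ_{i,j} a_{ij}^{w(s₁,s₂)})^{1/w(s₁,s₂)}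
  ≤ (Σ_i ‖β_i‖_q^{s₁})^{f(s₁,s₂)/s₁} (Σ_j ‖α_j‖_q^{s₂})^{f(s₂,s₁)/s₂}`,
where `β_i` are the rows and `α_j` the columns of the matrix. -/
theorem blei_inequality {A B : Type*} [Fintype A] [Fintype B] [Nonempty A] [Nonempty B]
    (a : A → B → ℝ) (ha : ∀ i j, 0 ≤ a i j) (q s₁ s₂ : ℝ)
    (hs₁ : 1 ≤ s₁) (hs₂ : 1 ≤ s₂) (hq : max s₁ s₂ < q) :
    (∑ i : A, ∑ j : B, a i j ^ bleiW q s₁ s₂) ^ (1 / bleiW q s₁ s₂) ≤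
      (∑ i : A, ((∑ j : B, |a i j| ^ q) ^ (1 / q)) ^ s₁) ^ (bleiF q s₁ s₂ / s₁) *
        (∑ j : B, ((∑ i : A, |a i j| ^ q) ^ (1 / q)) ^ s₂) ^ (bleiF q s₂ s₁ / s₂) :=
  blei_inequality_general a ha q s₁ s₂ hs₁ hs₂ hq
end

section
/- For any real numbers 0 < p ≤ q < ∞ and any doubly indexed family of complex numbers (c_{ij})_{i,j=1}^∞ (with the relevant sums possibly infinite), one has (Σ_{i=1}^∞ (Σ_{j=1}^∞ |c_{ij}|^p)^{q/p})^{1/q} ≤ (Σ_{j=1}^∞ (Σ_{i=1}^∞ |c_{ij}|^q)^{p/q})^{1/p}. -/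
/-!
With `a i j = |c i j| ^ p` and `r = q / p ≥ 1`, the inequality is the `r`-th root of Minkowski's
inequality in `ℓ^r` for the sum over `j` of the column vectors `(a i j)_i`: the `ℓ^r` norm of a sum
is at most the sum of the norms. For finitely many columns this is the two-term Minkowski inequality
iterated, and in `ℝ≥0∞` it passes to infinite sums through their finite partial sums.
-/

open Filter Topology
open scoped ENNReal

namespace ENNReal

variable {ι κ : Type*} {r : ℝ}

theorem Lp_finset_sum_le (hr : 1 ≤ r) (a : ι → κ → ℝ≥0∞) (t : Finset ι) (s : Finset κ) :
    (∑ i ∈ t, (∑ j ∈ s, a i j) ^ r) ^ (1 / r) ≤ ∑ j ∈ s, (∑ i ∈ t, a i j ^ r) ^ (1 / r) := by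
  classical
  have hr0 : 0 < r := zero_lt_one.trans_le hr
  induction s using Finset.induction with
  | empty => simp [zero_rpow_of_pos hr0, hr0]
  | @insert j s hj ih =>
    simp only [Finset.sum_insert hj]
    exact (Lp_add_le t _ _ hr).trans (add_le_add_right ih _)

theorem Lp_tsum_le (hr : 1 ≤ r) (a : ι → κ → ℝ≥0∞) :
    (∑' i, (∑' j, a i j) ^ r) ^ (1 / r) ≤ ∑' j, (∑' i, a i j ^ r) ^ (1 / r) := by
  have hr0 : 0 < r := zero_lt_one.trans_le hr
  rw [one_div, rpow_inv_le_iff hr0]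
  refine ENNReal.summable.tsum_le_of_sum_le fun t => ?_
  have h_tendsto : Tendsto (fun s : Finset κ => ∑ i ∈ t, (∑ j ∈ s, a i j) ^ r)
      atTop (𝓝 (∑ i ∈ t, (∑' j, a i j) ^ r)) :=
    tendsto_finsetSum t fun i _ =>
      (continuous_rpow_const.tendsto _).comp ENNReal.summable.hasSum
  refine le_of_tendsto' h_tendsto fun s => ?_
  rw [← rpow_inv_le_iff hr0, ← one_div]
  calc (∑ i ∈ t, (∑ j ∈ s, a i j) ^ r) ^ (1 / r)
      ≤ ∑ j ∈ s, (∑ i ∈ t, a i j ^ r) ^ (1 / r) := Lp_finset_sum_le hr a t s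
    _ ≤ ∑ j ∈ s, (∑' i, a i j ^ r) ^ (1 / r) := by
        gcongr
        exact ENNReal.sum_le_tsum t
    _ ≤ ∑' j, (∑' i, a i j ^ r) ^ (1 / r) := ENNReal.sum_le_tsum s

end ENNReal

/-- **A corollary of Minkowski's inequality.** For real numbers `0 < p ≤ q < ∞` and any doubly
indexed family of complex numbers `(c_{ij})`, interpreted in the extended nonnegative reals,
`(Σ_i (Σ_j |c_{ij}|^p)^{q/p})^{1/q} ≤ (Σ_j (Σ_i |c_{ij}|^q)^{p/q})^{1/p}`. -/
theorem minkowski_corollary (p q : ℝ) (hp : 0 < p) (hpq : p ≤ q) (c : ℕ → ℕ → ℂ) :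
    (∑' i : ℕ, (∑' j : ℕ, (‖c i j‖₊ : ℝ≥0∞) ^ p) ^ (q / p)) ^ (1 / q) ≤
      (∑' j : ℕ, (∑' i : ℕ, (‖c i j‖₊ : ℝ≥0∞) ^ q) ^ (p / q)) ^ (1 / p) := by
  set r := q / p
  set a : ℕ → ℕ → ℝ≥0∞ := fun i j => (‖c i j‖₊ : ℝ≥0∞) ^ p
  have ha_rpow : ∀ i j, a i j ^ r = (‖c i j‖₊ : ℝ≥0∞) ^ q := fun i j => by
    rw [← ENNReal.rpow_mul, mul_div_cancel₀ q hp.ne']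
  have h_inner : p / q = 1 / r := (one_div_div q p).symm
  have h_exp : 1 / q = 1 / r * (1 / p) := by rw [← h_inner]; field_simp
  calc (∑' i, (∑' j, a i j) ^ r) ^ (1 / q)
      = ((∑' i, (∑' j, a i j) ^ r) ^ (1 / r)) ^ (1 / p) := by rw [h_exp, ENNReal.rpow_mul]
    _ ≤ (∑' j, (∑' i, a i j ^ r) ^ (1 / r)) ^ (1 / p) :=
        ENNReal.rpow_le_rpow (ENNReal.Lp_tsum_le ((one_le_div hp).mpr hpq) a) (by positivity)
    _ = _ := by simp only [ha_rpow, h_inner]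
end

section
/- (Littlewood's 4/3 inequality) For every positive integer N and every bilinear form U : ℓ_∞^N × ℓ_∞^N → 𝕂 (where 𝕂 is ℝ or ℂ), one has (Σ_{i,j=1}^N |U(e_i, e_j)|^{4/3})^{3/4} ≤ √2 · ‖U‖. -/
/-!
Khintchine's inequality with Szarek's sharp constant, `√(∑ ‖xᵢ‖²) ≤ √2 𝔼_ε ‖∑ ±xᵢ‖`, applied to
the rows of the coefficient matrix `aᵢⱼ = U(eᵢ, eⱼ)`, bounds its mixed norm `ℓ¹(ℓ²)` by `√2 ‖U‖`:
for each sign vector `ε`, `∑ᵢ |U(eᵢ, ε)| ≤ ‖U‖`. Applied to the columns, and combined with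
Minkowski's inequality, it bounds the mixed norm `ℓ²(ℓ¹)` in the same way, and Hölder's inequality
bounds the `ℓ^{4/3}` norm by the geometric mean of the two mixed norms.

Khintchine's inequality comes from the Poincaré inequality `Var f ≤ ½ ∑ⱼ 𝔼 (Dⱼ f)²` for even
functions on the Boolean cube, applied to `f ε = ‖∑ ±xᵢ‖`: its second moment is `∑ ‖xᵢ‖²`
(parallelogram law) and `|Dⱼ f| ≤ ‖xⱼ‖`.
-/

open scoped BigOperators

namespace BooleanCube

noncomputable section

variable {n : ℕ}

def antipode (ε : Fin n → Bool) : Fin n → Bool := not ∘ ε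

def discreteDeriv (j : Fin n) (f : (Fin n → Bool) → ℝ) (ε : Fin n → Bool) : ℝ :=
  (f ε - f (Function.update ε j (!ε j))) / 2

def totalInfluence (f : (Fin n → Bool) → ℝ) : ℝ :=
  ∑ j, 𝔼 ε, discreteDeriv j f ε ^ 2

def headMean (f : (Fin (n + 1) → Bool) → ℝ) (ε : Fin n → Bool) : ℝ :=
  (f (Fin.cons false ε) + f (Fin.cons true ε)) / 2

def headDiff (f : (Fin (n + 1) → Bool) → ℝ) (ε : Fin n → Bool) : ℝ :=
  (f (Fin.cons false ε) - f (Fin.cons true ε)) / 2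

lemma antipode_cons (b : Bool) (ε : Fin n → Bool) :
    antipode (Fin.cons b ε : Fin (n + 1) → Bool) = Fin.cons (!b) (antipode ε) :=
  Fin.comp_cons _ _ _

lemma expect_cube_succ (F : (Fin (n + 1) → Bool) → ℝ) :
    𝔼 ε, F ε = (𝔼 ε, F (Fin.cons false ε) + 𝔼 ε, F (Fin.cons true ε)) / 2 := by
  rw [← Fintype.expect_equiv (Fin.consEquiv fun _ => Bool) (fun p => F (Fin.cons p.1 p.2)) F
    fun _ => rfl, ← Finset.univ_product_univ, Finset.expect_product,
    Fintype.expect_eq_sum_div_card (fun b : Bool => _), Fintype.sum_bool]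
  simp [add_comm]

lemma expect_sq_add_expect_sq {α : Type*} [Fintype α] (u v : α → ℝ) :
    (𝔼 a, u a ^ 2 + 𝔼 a, v a ^ 2) / 2 =
      𝔼 a, ((u a + v a) / 2) ^ 2 + 𝔼 a, ((u a - v a) / 2) ^ 2 := by
  rw [← Finset.expect_add_distrib, ← Finset.expect_add_distrib, Finset.expect_div]
  exact Finset.expect_congr rfl fun a _ => by ring

lemma expect_succ (f : (Fin (n + 1) → Bool) → ℝ) : 𝔼 ε, f ε = 𝔼 ε, headMean f ε := by
  rw [expect_cube_succ, ← Finset.expect_add_distrib, Finset.expect_div]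
  rfl

lemma expect_sq_succ (f : (Fin (n + 1) → Bool) → ℝ) :
    𝔼 ε, f ε ^ 2 = 𝔼 ε, headMean f ε ^ 2 + 𝔼 ε, headDiff f ε ^ 2 := by
  rw [expect_cube_succ, expect_sq_add_expect_sq]
  rfl

lemma discreteDeriv_zero_cons_sq (f : (Fin (n + 1) → Bool) → ℝ) (b : Bool) (ε : Fin n → Bool) :
    discreteDeriv 0 f (Fin.cons b ε) ^ 2 = headDiff f ε ^ 2 := by
  cases b
  · simp only [discreteDeriv, headDiff, Fin.cons_zero, Fin.update_cons_zero, Bool.not_false]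
  · simp only [discreteDeriv, headDiff, Fin.cons_zero, Fin.update_cons_zero, Bool.not_true]
    ring

lemma discreteDeriv_succ_cons (f : (Fin (n + 1) → Bool) → ℝ) (j : Fin n) (b : Bool)
    (ε : Fin n → Bool) :
    discreteDeriv j.succ f (Fin.cons b ε) = discreteDeriv j (fun ε => f (Fin.cons b ε)) ε := by
  simp only [discreteDeriv, Fin.cons_succ, Fin.cons_update]

lemma totalInfluence_succ (f : (Fin (n + 1) → Bool) → ℝ) :
    totalInfluence f = 𝔼 ε, headDiff f ε ^ 2 + totalInfluence (headMean f) +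
      totalInfluence (headDiff f) := by
  have hzero : 𝔼 ε, discreteDeriv 0 f ε ^ 2 = 𝔼 ε, headDiff f ε ^ 2 := by
    simp only [expect_cube_succ, discreteDeriv_zero_cons_sq, add_self_div_two]
  have hsucc (j : Fin n) : 𝔼 ε, discreteDeriv j.succ f ε ^ 2 =
      𝔼 ε, discreteDeriv j (headMean f) ε ^ 2 + 𝔼 ε, discreteDeriv j (headDiff f) ε ^ 2 := by
    rw [expect_cube_succ]
    simp only [discreteDeriv_succ_cons, expect_sq_add_expect_sq]
    congr 1 <;> refine Finset.expect_congr rfl fun ε _ => ?_ <;>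
      simp only [discreteDeriv, headMean, headDiff] <;> ring
  rw [totalInfluence, Fin.sum_univ_succ, hzero, Finset.sum_congr rfl fun j _ => hsucc j,
    Finset.sum_add_distrib, add_assoc]
  rfl

lemma totalInfluence_nonneg (f : (Fin n → Bool) → ℝ) : 0 ≤ totalInfluence f :=
  Finset.sum_nonneg fun _ _ => Finset.expect_nonneg fun _ _ => sq_nonneg _

lemma cons_antipode (b : Bool) (ε : Fin n → Bool) :
    (Fin.cons b (antipode ε) : Fin (n + 1) → Bool) = antipode (Fin.cons (!b) ε) := by
  rw [antipode_cons, Bool.not_not]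

lemma headMean_antipode_of_even {f : (Fin (n + 1) → Bool) → ℝ}
    (hf : ∀ ε, f (antipode ε) = f ε) (ε : Fin n → Bool) :
    headMean f (antipode ε) = headMean f ε := by
  simp only [headMean, cons_antipode, hf, Bool.not_false, Bool.not_true]
  ring

lemma headDiff_antipode_of_even {f : (Fin (n + 1) → Bool) → ℝ}
    (hf : ∀ ε, f (antipode ε) = f ε) (ε : Fin n → Bool) :
    headDiff f (antipode ε) = -headDiff f ε := by
  simp only [headDiff, cons_antipode, hf, Bool.not_false, Bool.not_true]
  ring

lemma headMean_antipode_of_odd {f : (Fin (n + 1) → Bool) → ℝ}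
    (hf : ∀ ε, f (antipode ε) = -f ε) (ε : Fin n → Bool) :
    headMean f (antipode ε) = -headMean f ε := by
  simp only [headMean, cons_antipode, hf, Bool.not_false, Bool.not_true]
  ring

theorem expect_sq_le_totalInfluence_of_odd :
    ∀ {n : ℕ} (f : (Fin n → Bool) → ℝ), (∀ ε, f (antipode ε) = -f ε) →
      𝔼 ε, f ε ^ 2 ≤ totalInfluence f
  | 0, f, hf => by
    have hzero (ε : Fin 0 → Bool) : f ε = 0 := by
      have := hf ε
      rw [Subsingleton.elim (antipode ε) ε] at this
      linarith
    simp [hzero, totalInfluence]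
  | n + 1, f, hf => by
    have hmean := expect_sq_le_totalInfluence_of_odd (headMean f) (headMean_antipode_of_odd hf)
    rw [expect_sq_succ, totalInfluence_succ]
    linarith [totalInfluence_nonneg (headDiff f)]

/-- The first-coordinate difference of an even function is odd, and odd functions satisfy the
Poincaré inequality with constant `1`: this is where the factor `½` comes from. -/
theorem expect_sq_sub_sq_expect_le_of_even :
    ∀ {n : ℕ} (f : (Fin n → Bool) → ℝ), (∀ ε, f (antipode ε) = f ε) →
      𝔼 ε, f ε ^ 2 - (𝔼 ε, f ε) ^ 2 ≤ totalInfluence f / 2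
  | 0, f, _ => by
    have hconst (ε : Fin 0 → Bool) : f ε = f default := congrArg f (Subsingleton.elim _ _)
    simp [hconst, totalInfluence]
  | n + 1, f, hf => by
    have hmean := expect_sq_sub_sq_expect_le_of_even (headMean f) (headMean_antipode_of_even hf)
    have hdiff := expect_sq_le_totalInfluence_of_odd (headDiff f) (headDiff_antipode_of_even hf)
    rw [expect_sq_succ, expect_succ, totalInfluence_succ]
    linarith

section Khintchine

variable {E : Type*}

def signedSum [AddCommGroup E] (x : Fin n → E) (ε : Fin n → Bool) : E :=
  ∑ i, if ε i then x i else -x i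

lemma signedSum_cons [AddCommGroup E] (x : Fin (n + 1) → E) (b : Bool) (ε : Fin n → Bool) :
    signedSum x (Fin.cons b ε) =
      (if b then x 0 else -x 0) + signedSum (fun i => x i.succ) ε := by
  simp only [signedSum, Fin.sum_univ_succ, Fin.cons_zero, Fin.cons_succ]

lemma signedSum_antipode [AddCommGroup E] (x : Fin n → E) (ε : Fin n → Bool) :
    signedSum x (antipode ε) = -signedSum x ε := by
  simp only [signedSum, antipode, Function.comp_apply, ← Finset.sum_neg_distrib]
  refine Finset.sum_congr rfl fun i _ => ?_
  rcases Bool.eq_false_or_eq_true (ε i) with h | h <;> simp [h]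

variable [NormedAddCommGroup E] [InnerProductSpace ℝ E]

lemma norm_signedSum_sub_signedSum_update (x : Fin n → E) (ε : Fin n → Bool) (j : Fin n) :
    ‖signedSum x ε - signedSum x (Function.update ε j (!ε j))‖ = 2 * ‖x j‖ := by
  rw [signedSum, signedSum, ← Finset.sum_sub_distrib, Fintype.sum_eq_single j fun i hi => by
    rw [Function.update_of_ne hi, sub_self], Function.update_self]
  have htwo : ‖x j + x j‖ = 2 * ‖x j‖ := by rw [← two_smul ℝ, norm_smul, Real.norm_two]
  cases ε j
  · simp only [Bool.not_false, if_true, Bool.false_eq_true, if_false, sub_eq_neg_add, ← neg_add,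
      norm_neg, htwo]
  · simp only [Bool.not_true, if_true, Bool.false_eq_true, if_false, sub_neg_eq_add, htwo]

lemma abs_discreteDeriv_norm_signedSum_le (x : Fin n → E) (j : Fin n) (ε : Fin n → Bool) :
    |discreteDeriv j (fun ε => ‖signedSum x ε‖) ε| ≤ ‖x j‖ := by
  rw [discreteDeriv, abs_div, abs_two, div_le_iff₀ two_pos, mul_comm,
    ← norm_signedSum_sub_signedSum_update x ε j]
  exact abs_norm_sub_norm_le _ _

lemma expect_norm_signedSum_sq : ∀ {n : ℕ} (x : Fin n → E),
    𝔼 ε, ‖signedSum x ε‖ ^ 2 = ∑ i, ‖x i‖ ^ 2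
  | 0, x => by simp [signedSum]
  | n + 1, x => by
    have hpar (v : E) : (‖-x 0 + v‖ ^ 2 + ‖x 0 + v‖ ^ 2) / 2 = ‖x 0‖ ^ 2 + ‖v‖ ^ 2 := by
      have := parallelogram_law_with_norm ℝ (x 0) v
      rw [neg_add_eq_sub, norm_sub_rev]
      linarith
    rw [expect_cube_succ, Fin.sum_univ_succ, ← expect_norm_signedSum_sq (fun i => x i.succ),
      ← Finset.expect_add_distrib, Finset.expect_div]
    simp only [signedSum_cons, if_true, Bool.false_eq_true, if_false, hpar]
    rw [Finset.expect_add_distrib, Fintype.expect_const]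

theorem khintchine (x : Fin n → E) :
    √(∑ i, ‖x i‖ ^ 2) ≤ √2 * 𝔼 ε, ‖signedSum x ε‖ := by
  set f : (Fin n → Bool) → ℝ := fun ε => ‖signedSum x ε‖
  have hvar := expect_sq_sub_sq_expect_le_of_even f fun ε => by
    simp only [f, signedSum_antipode, norm_neg]
  have hinf : totalInfluence f ≤ ∑ i, ‖x i‖ ^ 2 := by
    refine Finset.sum_le_sum fun j _ => ?_
    refine Finset.expect_le Finset.univ_nonempty fun ε _ => ?_
    exact sq_le_sq.2 <| (abs_discreteDeriv_norm_signedSum_le x j ε).trans_eq (abs_norm _).symm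
  rw [expect_norm_signedSum_sq] at hvar
  rw [Real.sqrt_le_iff, mul_pow, Real.sq_sqrt zero_le_two]
  exact ⟨mul_nonneg (Real.sqrt_nonneg 2) (Finset.expect_nonneg fun _ _ => norm_nonneg _),
    by linarith⟩

end Khintchine

end

end BooleanCube

section MixedNorms

variable {ι κ : Type*}

lemma Real.sum_rpow_mul_rpow_le (s : Finset ι) {θ : ℝ} (hθ₀ : 0 < θ) (hθ₁ : θ < 1)
    {F G : ι → ℝ} (hF : ∀ i ∈ s, 0 ≤ F i) (hG : ∀ i ∈ s, 0 ≤ G i) :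
    ∑ i ∈ s, F i ^ θ * G i ^ (1 - θ) ≤ (∑ i ∈ s, F i) ^ θ * (∑ i ∈ s, G i) ^ (1 - θ) := by
  have hθ₁' : 0 < 1 - θ := sub_pos.2 hθ₁
  have h := Real.inner_le_Lp_mul_Lq_of_nonneg s
    (Real.HolderConjugate.inv_inv hθ₀ hθ₁' (add_sub_cancel θ 1))
    (fun i hi => Real.rpow_nonneg (hF i hi) θ) (fun i hi => Real.rpow_nonneg (hG i hi) (1 - θ))
  rwa [Finset.sum_congr rfl fun i hi => Real.rpow_rpow_inv (hF i hi) hθ₀.ne',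
    Finset.sum_congr rfl fun i hi => Real.rpow_rpow_inv (hG i hi) hθ₁'.ne', one_div, one_div,
    inv_inv, inv_inv] at h

lemma sqrt_sum_sq_sum_le_sum_sqrt_sum_sq [Fintype ι] [Fintype κ] (a : ι → κ → ℝ) :
    √(∑ i, (∑ j, a i j) ^ 2) ≤ ∑ j, √(∑ i, a i j ^ 2) := by
  simpa [EuclideanSpace.norm_eq] using
    norm_sum_le Finset.univ fun j => (WithLp.toLp 2 fun i => a i j : EuclideanSpace ℝ ι)

theorem sum_sum_rpow_four_thirds_le [Fintype ι] [Fintype κ] (a : ι → κ → ℝ)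
    (ha : ∀ i j, 0 ≤ a i j) :
    (∑ i, ∑ j, a i j ^ (4 / 3 : ℝ)) ^ (3 / 4 : ℝ) ≤
      √((∑ i, √(∑ j, a i j ^ 2)) * √(∑ i, (∑ j, a i j) ^ 2)) := by
  set X : ι → ℝ := fun i => ∑ j, a i j ^ 2
  set Y : ι → ℝ := fun i => ∑ j, a i j
  have hX (i : ι) : 0 ≤ X i := Finset.sum_nonneg fun j _ => sq_nonneg _
  have hY (i : ι) : 0 ≤ Y i := Finset.sum_nonneg fun j _ => ha i j
  have hrow (i : ι) :
      ∑ j, a i j ^ (4 / 3 : ℝ) ≤ √(X i) ^ (2 / 3 : ℝ) * (Y i ^ 2) ^ (1 - 2 / 3 : ℝ) :=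
    calc ∑ j, a i j ^ (4 / 3 : ℝ)
        = ∑ j, (a i j ^ 2) ^ (1 / 3 : ℝ) * a i j ^ (1 - 1 / 3 : ℝ) := by
          refine Finset.sum_congr rfl fun j _ => ?_
          rw [← Real.rpow_natCast, ← Real.rpow_mul (ha i j),
            ← Real.rpow_add' (ha i j) (by norm_num)]
          norm_num
      _ ≤ X i ^ (1 / 3 : ℝ) * Y i ^ (1 - 1 / 3 : ℝ) :=
          Real.sum_rpow_mul_rpow_le _ (by norm_num) (by norm_num) (fun j _ => sq_nonneg _)
            (fun j _ => ha i j)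
      _ = √(X i) ^ (2 / 3 : ℝ) * (Y i ^ 2) ^ (1 - 2 / 3 : ℝ) := by
          rw [Real.sqrt_eq_rpow, ← Real.rpow_natCast, ← Real.rpow_mul (hX i),
            ← Real.rpow_mul (hY i)]
          norm_num
  have hsum := (Finset.sum_le_sum fun i _ => hrow i).trans
    (Real.sum_rpow_mul_rpow_le Finset.univ (by norm_num) (by norm_num)
      (fun i _ => Real.sqrt_nonneg (X i)) (fun i _ => sq_nonneg (Y i)))
  have hA : 0 ≤ ∑ i, √(X i) := Finset.sum_nonneg fun i _ => Real.sqrt_nonneg _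
  have hB : 0 ≤ ∑ i, Y i ^ 2 := Finset.sum_nonneg fun i _ => sq_nonneg _
  calc (∑ i, ∑ j, a i j ^ (4 / 3 : ℝ)) ^ (3 / 4 : ℝ)
      ≤ ((∑ i, √(X i)) ^ (2 / 3 : ℝ) * (∑ i, Y i ^ 2) ^ (1 - 2 / 3 : ℝ)) ^ (3 / 4 : ℝ) :=
        Real.rpow_le_rpow (Finset.sum_nonneg fun i _ => Finset.sum_nonneg fun j _ =>
          Real.rpow_nonneg (ha i j) _) hsum (by norm_num)
    _ = √((∑ i, √(X i)) * √(∑ i, Y i ^ 2)) := by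
        rw [Real.mul_rpow (Real.rpow_nonneg hA _) (Real.rpow_nonneg hB _), Real.sqrt_mul hA,
          Real.sqrt_eq_rpow, Real.sqrt_eq_rpow, Real.sqrt_eq_rpow, ← Real.rpow_mul hA,
          ← Real.rpow_mul hB, ← Real.rpow_mul hB]
        norm_num

end MixedNorms

section Bilinear

open BooleanCube

variable {𝕂 : Type*} [RCLike 𝕂] {n : ℕ}

lemma RCLike.conj_div_norm_mul_self (w : 𝕂) : starRingEnd 𝕂 w / ‖w‖ * w = ‖w‖ := by
  rcases eq_or_ne w 0 with rfl | hw
  · simp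
  · rw [div_mul_eq_mul_div, RCLike.conj_mul, sq, mul_div_assoc, div_self (by simpa using hw),
      mul_one]

lemma sum_norm_apply_single_le_opNorm {ι : Type*} [Fintype ι] [DecidableEq ι]
    (T : (ι → 𝕂) →L[𝕂] 𝕂) : ∑ i, ‖T (Pi.single i 1)‖ ≤ ‖T‖ := by
  set z : ι → 𝕂 := fun i => starRingEnd 𝕂 (T (Pi.single i 1)) / ‖T (Pi.single i 1)‖
  have hz : ‖z‖ ≤ 1 := (pi_norm_le_iff_of_nonneg zero_le_one).2 fun i => by
    simp only [z, norm_div, RCLike.norm_conj, RCLike.norm_ofReal, abs_norm]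
    exact div_self_le_one _
  have hTz : T z = ((∑ i, ‖T (Pi.single i 1)‖ : ℝ) : 𝕂) := by
    conv_lhs => rw [pi_eq_sum_univ' z]
    simp only [map_sum, map_smul, smul_eq_mul, z, RCLike.conj_div_norm_mul_self]
  calc ∑ i, ‖T (Pi.single i 1)‖ = ‖T z‖ := by
        rw [hTz, RCLike.norm_ofReal, abs_of_nonneg (Finset.sum_nonneg fun i _ => norm_nonneg _)]
    _ ≤ ‖T‖ * ‖z‖ := T.le_opNorm z
    _ ≤ ‖T‖ := mul_le_of_le_one_right (norm_nonneg T) hz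

lemma sum_norm_apply_single_apply_le {ι F : Type*} [Fintype ι] [DecidableEq ι]
    [NormedAddCommGroup F] [NormedSpace 𝕂 F] (U : (ι → 𝕂) →L[𝕂] F →L[𝕂] 𝕂) {y : F} (hy : ‖y‖ ≤ 1) :
    ∑ i, ‖U (Pi.single i 1) y‖ ≤ ‖U‖ :=
  calc ∑ i, ‖U (Pi.single i 1) y‖ = ∑ i, ‖U.flip y (Pi.single i 1)‖ := rfl
    _ ≤ ‖U.flip y‖ := sum_norm_apply_single_le_opNorm _
    _ ≤ ‖U.flip‖ * ‖y‖ := U.flip.le_opNorm y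
    _ ≤ ‖U‖ := by
        rw [ContinuousLinearMap.opNorm_flip]
        exact mul_le_of_le_one_right (norm_nonneg U) hy

def BooleanCube.signVector (ε : Fin n → Bool) : Fin n → 𝕂 := fun j => if ε j then 1 else -1

lemma BooleanCube.norm_signVector_le (ε : Fin n → Bool) : ‖(signVector ε : Fin n → 𝕂)‖ ≤ 1 :=
  (pi_norm_le_iff_of_nonneg zero_le_one).2 fun j => by
    by_cases h : ε j <;> simp [signVector, h]

lemma BooleanCube.map_signVector {M : Type*} [AddCommGroup M] [Module 𝕂 M]
    (T : (Fin n → 𝕂) →ₗ[𝕂] M) (ε : Fin n → Bool) :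
    T (signVector ε) = signedSum (fun j => T (Pi.single j 1)) ε := by
  conv_lhs => rw [pi_eq_sum_univ' (signVector ε)]
  simp only [map_sum, signedSum, signVector, ite_smul, one_smul, neg_smul, apply_ite T, map_neg]

theorem sum_sqrt_sum_sq_le_sqrt_two_mul_opNorm {ι : Type*} [Fintype ι] [DecidableEq ι]
    (U : (ι → 𝕂) →L[𝕂] (Fin n → 𝕂) →L[𝕂] 𝕂) :
    ∑ i, √(∑ j, ‖U (Pi.single i 1) (Pi.single j 1)‖ ^ 2) ≤ √2 * ‖U‖ :=
  calc ∑ i, √(∑ j, ‖U (Pi.single i 1) (Pi.single j 1)‖ ^ 2)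
      ≤ ∑ i, √2 * 𝔼 ε, ‖signedSum (fun j => U (Pi.single i 1) (Pi.single j 1)) ε‖ :=
        Finset.sum_le_sum fun i _ => khintchine _
    _ = √2 * 𝔼 ε, ∑ i, ‖U (Pi.single i 1) (signVector ε)‖ := by
        simp only [← Finset.mul_sum, Finset.expect_sum_comm,
          ← ContinuousLinearMap.coe_coe (U (Pi.single _ 1)), map_signVector]
    _ ≤ √2 * ‖U‖ := by
        gcongr
        exact Finset.expect_le Finset.univ_nonempty fun ε _ =>
          sum_norm_apply_single_apply_le U (norm_signVector_le ε)

end Bilinear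

theorem littlewood_four_thirds_general {𝕂 : Type*} [RCLike 𝕂] (N : ℕ)
    (U : (Fin N → 𝕂) →L[𝕂] (Fin N → 𝕂) →L[𝕂] 𝕂) :
    (∑ i : Fin N, ∑ j : Fin N,
        ‖U (Pi.single i 1) (Pi.single j 1)‖ ^ ((4 : ℝ) / 3)) ^ ((3 : ℝ) / 4) ≤
      Real.sqrt 2 * ‖U‖ := by
  set a : Fin N → Fin N → ℝ := fun i j => ‖U (Pi.single i 1) (Pi.single j 1)‖
  have hrows : ∑ i, √(∑ j, a i j ^ 2) ≤ √2 * ‖U‖ := sum_sqrt_sum_sq_le_sqrt_two_mul_opNorm U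
  have hcols : √(∑ i, (∑ j, a i j) ^ 2) ≤ √2 * ‖U‖ :=
    (sqrt_sum_sq_sum_le_sum_sqrt_sum_sq a).trans <| by
      simpa only [ContinuousLinearMap.flip_apply, ContinuousLinearMap.opNorm_flip] using
        sum_sqrt_sum_sq_le_sqrt_two_mul_opNorm U.flip
  have hM : 0 ≤ √2 * ‖U‖ := by positivity
  calc (∑ i, ∑ j, a i j ^ ((4 : ℝ) / 3)) ^ ((3 : ℝ) / 4)
      ≤ √((∑ i, √(∑ j, a i j ^ 2)) * √(∑ i, (∑ j, a i j) ^ 2)) :=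
        sum_sum_rpow_four_thirds_le a fun i j => norm_nonneg _
    _ ≤ √((√2 * ‖U‖) * (√2 * ‖U‖)) :=
        Real.sqrt_le_sqrt (mul_le_mul hrows hcols (Real.sqrt_nonneg _) hM)
    _ = √2 * ‖U‖ := Real.sqrt_mul_self hM

/-- **Littlewood's 4/3 inequality.** For every bilinear form
`U : ℓ_∞^N × ℓ_∞^N → 𝕂` (`𝕂 = ℝ` or `ℂ`),
`(Σ_{i,j=1}^N |U(e_i,e_j)|^{4/3})^{3/4} ≤ √2 ‖U‖`. -/
theorem littlewood_four_thirds {𝕂 : Type*} [RCLike 𝕂] (N : ℕ) (hN : 0 < N)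
    (U : (Fin N → 𝕂) →L[𝕂] (Fin N → 𝕂) →L[𝕂] 𝕂) :
    (∑ i : Fin N, ∑ j : Fin N,
        ‖U (Pi.single i 1) (Pi.single j 1)‖ ^ ((4 : ℝ) / 3)) ^ ((3 : ℝ) / 4) ≤
      Real.sqrt 2 * ‖U‖ :=
  littlewood_four_thirds_general N U
end

section
/- (Optimality of the exponent 4/3 in Littlewood's inequality) Let q > 0 and suppose there exists a constant C₁ > 0 such that for every positive integer N and every bilinear form U : ℓ_∞^N × ℓ_∞^N → ℂ one has (Σ_{i,j=1}^N |U(e_i, e_j)|^q)^{1/q} ≤ C₁ ‖U‖. Then q ≥ 4/3. -/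
open scoped BigOperators

open Complex Finset

noncomputable section LW

namespace LW

variable (n : ℕ)

def ζ : ℂ := Complex.exp (2 * Real.pi * I / n)

def a (j k : Fin n) : ℂ := ζ n ^ ((j : ℕ) * (k : ℕ))

lemma zeta_norm (hn : n ≠ 0) : ‖ζ n‖ = 1 := by
  have h := Complex.isPrimitiveRoot_exp n hn
  have h1 : (ζ n) ^ n = 1 := h.pow_eq_one
  have h2 : ‖ζ n‖ ^ n = 1 := by rw [← norm_pow, h1, norm_one]
  have h0 : (0:ℝ) ≤ ‖ζ n‖ := norm_nonneg _
  rcases lt_trichotomy ‖ζ n‖ 1 with hlt | heq | hgt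
  · exact absurd h2 (by nlinarith [pow_lt_one₀ h0 hlt hn])
  · exact heq
  · exact absurd h2 (by nlinarith [one_lt_pow₀ hgt hn])

lemma orth (hn : n ≠ 0) (j j' : Fin n) :
    ∑ k : Fin n, a n j k * (starRingEnd ℂ) (a n j' k) = if j = j' then (n : ℂ) else 0 := by
  have hz : ‖ζ n‖ = 1 := zeta_norm n hn
  have hz0 : ζ n ≠ 0 := by intro hc; rw [hc] at hz; simp at hz
  have hprim := Complex.isPrimitiveRoot_exp n hn
  set d : ℤ := ((j : ℕ) : ℤ) - ((j' : ℕ) : ℤ) with hd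
  have hterm : ∀ k : Fin n, a n j k * (starRingEnd ℂ) (a n j' k) = (ζ n ^ d) ^ (k : ℕ) := by
    intro k
    have hconj : (starRingEnd ℂ) (a n j' k) = (ζ n)⁻¹ ^ ((j' : ℕ) * (k : ℕ)) := by
      rw [a, map_pow, ← Complex.inv_eq_conj hz]
    rw [a, hconj, inv_pow, ← zpow_natCast (ζ n) ((j : ℕ) * (k : ℕ)),
      ← zpow_natCast (ζ n) ((j' : ℕ) * (k : ℕ)), ← zpow_neg, ← zpow_add₀ hz0,
      ← zpow_natCast (ζ n ^ d) (k : ℕ), ← zpow_mul]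
    congr 1
    push_cast
    ring
  rw [Finset.sum_congr rfl fun k _ => hterm k]
  rw [Fin.sum_univ_eq_sum_range (fun i => (ζ n ^ d) ^ i) n]
  by_cases hjj : j = j'
  · subst hjj
    simp [hd]
  · rw [if_neg hjj]
    have hndvd : ¬ ((n : ℤ) ∣ d) := by
      intro hdvd
      have hdne : d ≠ 0 := by
        intro hc
        apply hjj
        apply Fin.ext
        omega
      have h1 : (n : ℤ) ≤ |d| := Int.le_of_dvd (abs_pos.mpr hdne) ((dvd_abs _ _).mpr hdvd)
      have h2 : |d| < n := by
        have := j.isLt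
        have := j'.isLt
        rw [abs_lt]
        omega
      omega
    have hw : ζ n ^ d ≠ 1 := fun hc => hndvd ((hprim.zpow_eq_one_iff_dvd d).mp hc)
    have hwn : (ζ n ^ d) ^ n = 1 := by
      have h1 : ζ n ^ n = 1 := hprim.pow_eq_one
      rw [← zpow_natCast (ζ n ^ d) n, ← zpow_mul, mul_comm, zpow_mul, zpow_natCast, h1, one_zpow]
    rw [geom_sum_eq hw n, hwn]
    simp


lemma sum_sq (hn : n ≠ 0) (x : Fin n → ℂ) :
    ∑ k : Fin n, Complex.normSq (∑ j : Fin n, a n j k * x j) =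
      n * ∑ j : Fin n, Complex.normSq (x j) := by
  have key : ∑ k : Fin n, ((∑ j : Fin n, a n j k * x j) *
        (starRingEnd ℂ) (∑ j : Fin n, a n j k * x j)) =
      (n : ℂ) * ∑ j : Fin n, x j * (starRingEnd ℂ) (x j) := by
    have expand : ∀ k : Fin n, (∑ j : Fin n, a n j k * x j) *
        (starRingEnd ℂ) (∑ j : Fin n, a n j k * x j)
        = ∑ j : Fin n, ∑ j' : Fin n,
            (a n j k * (starRingEnd ℂ) (a n j' k)) * (x j * (starRingEnd ℂ) (x j')) := by
      intro k
      rw [map_sum, Finset.sum_mul_sum]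
      refine Finset.sum_congr rfl fun j _ => Finset.sum_congr rfl fun j' _ => ?_
      simp only [map_mul]
      ring
    rw [Finset.sum_congr rfl fun k _ => expand k, Finset.sum_comm]
    have inner : ∀ j : Fin n, ∑ k : Fin n, ∑ j' : Fin n,
        (a n j k * (starRingEnd ℂ) (a n j' k)) * (x j * (starRingEnd ℂ) (x j'))
        = (n : ℂ) * (x j * (starRingEnd ℂ) (x j)) := by
      intro j
      rw [Finset.sum_comm]
      have step : ∀ j' : Fin n, ∑ k : Fin n,
          (a n j k * (starRingEnd ℂ) (a n j' k)) * (x j * (starRingEnd ℂ) (x j'))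
          = (if j = j' then (n : ℂ) else 0) * (x j * (starRingEnd ℂ) (x j')) := fun j' => by
        rw [← Finset.sum_mul, orth n hn j j']
      rw [Finset.sum_congr rfl fun j' _ => step j']
      simp [Finset.sum_ite_eq, ite_mul]
    rw [Finset.sum_congr rfl fun j _ => inner j, ← Finset.mul_sum]
  simp only [Complex.mul_conj] at key
  exact_mod_cast key

def B : (Fin n → ℂ) →ₗ[ℂ] (Fin n → ℂ) →ₗ[ℂ] ℂ :=
  LinearMap.mk₂ ℂ (fun x y => ∑ j : Fin n, ∑ k : Fin n, a n j k * x j * y k)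
    (by
      intro x x' y
      simp only [Pi.add_apply, mul_add, add_mul, Finset.sum_add_distrib])
    (by
      intro c x y
      simp only [Pi.smul_apply, smul_eq_mul, Finset.mul_sum]
      exact Finset.sum_congr rfl fun j _ => Finset.sum_congr rfl fun k _ => by ring)
    (by
      intro x y y'
      simp only [Pi.add_apply, mul_add, add_mul, Finset.sum_add_distrib])
    (by
      intro c x y
      simp only [Pi.smul_apply, smul_eq_mul, Finset.mul_sum]
      exact Finset.sum_congr rfl fun j _ => Finset.sum_congr rfl fun k _ => by ring)

lemma norm_bound (hn : n ≠ 0) (x y : Fin n → ℂ) :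
    ‖∑ j : Fin n, ∑ k : Fin n, a n j k * x j * y k‖ ≤ (n : ℝ) ^ ((3:ℝ)/2) * ‖x‖ * ‖y‖ := by
  set S : Fin n → ℂ := fun k => ∑ j : Fin n, a n j k * x j with hS
  have hswap : ∑ j : Fin n, ∑ k : Fin n, a n j k * x j * y k = ∑ k : Fin n, S k * y k := by
    rw [Finset.sum_comm]
    exact Finset.sum_congr rfl fun k _ => (Finset.sum_mul _ _ _).symm
  rw [hswap]
  have h1 : ‖∑ k : Fin n, S k * y k‖ ≤ (∑ k : Fin n, ‖S k‖) * ‖y‖ := by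
    calc ‖∑ k : Fin n, S k * y k‖ ≤ ∑ k : Fin n, ‖S k * y k‖ := norm_sum_le _ _
      _ ≤ ∑ k : Fin n, ‖S k‖ * ‖y‖ := by
          refine Finset.sum_le_sum fun k _ => ?_
          rw [norm_mul]
          exact mul_le_mul_of_nonneg_left (norm_le_pi_norm y k) (norm_nonneg _)
      _ = (∑ k : Fin n, ‖S k‖) * ‖y‖ := by rw [Finset.sum_mul]
  have hsq : ∑ k : Fin n, ‖S k‖ ^ 2 ≤ (n : ℝ) * ((n : ℝ) * ‖x‖ ^ 2) := by
    have e1 : ∀ k : Fin n, ‖S k‖ ^ 2 = Complex.normSq (S k) := fun k => Complex.sq_norm (S k)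
    rw [Finset.sum_congr rfl fun k _ => e1 k, sum_sq n hn x]
    have : ∑ j : Fin n, Complex.normSq (x j) ≤ (n : ℝ) * ‖x‖ ^ 2 := by
      calc ∑ j : Fin n, Complex.normSq (x j) ≤ ∑ _j : Fin n, ‖x‖ ^ 2 := by
            refine Finset.sum_le_sum fun j _ => ?_
            rw [← Complex.sq_norm]
            exact pow_le_pow_left₀ (norm_nonneg _) (norm_le_pi_norm x j) 2
        _ = (n : ℝ) * ‖x‖ ^ 2 := by simp [Finset.sum_const, mul_comm]
    exact mul_le_mul_of_nonneg_left this (Nat.cast_nonneg n)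
  have hT : (∑ k : Fin n, ‖S k‖) ≤ (n : ℝ) ^ ((3:ℝ)/2) * ‖x‖ := by
    have hcs : (∑ k : Fin n, ‖S k‖) ^ 2 ≤ (∑ k : Fin n, ‖S k‖ ^ 2) * (n : ℝ) := by
      have := Finset.sum_mul_sq_le_sq_mul_sq Finset.univ (fun k : Fin n => ‖S k‖)
        (fun _ => (1 : ℝ))
      simpa using this
    have h2 : (∑ k : Fin n, ‖S k‖) ^ 2 ≤ ((n : ℝ) ^ ((3:ℝ)/2) * ‖x‖) ^ 2 := by
      have hr : ((n : ℝ) ^ ((3:ℝ)/2) * ‖x‖) ^ 2 = (n : ℝ) ^ (3 : ℕ) * ‖x‖ ^ 2 := by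
        rw [mul_pow, ← Real.rpow_natCast ((n : ℝ) ^ ((3:ℝ)/2)) 2,
          ← Real.rpow_mul (Nat.cast_nonneg n), ← Real.rpow_natCast (n : ℝ) 3]
        norm_num
      rw [hr]
      calc (∑ k : Fin n, ‖S k‖) ^ 2 ≤ (∑ k : Fin n, ‖S k‖ ^ 2) * (n : ℝ) := hcs
        _ ≤ ((n : ℝ) * ((n : ℝ) * ‖x‖ ^ 2)) * (n : ℝ) :=
            mul_le_mul_of_nonneg_right hsq (Nat.cast_nonneg n)
        _ = (n : ℝ) ^ (3 : ℕ) * ‖x‖ ^ 2 := by ring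
    have hpos : (0:ℝ) ≤ ∑ k : Fin n, ‖S k‖ := Finset.sum_nonneg fun k _ => norm_nonneg _
    have hpos2 : (0:ℝ) ≤ (n : ℝ) ^ ((3:ℝ)/2) * ‖x‖ :=
      mul_nonneg (Real.rpow_nonneg (Nat.cast_nonneg n) _) (norm_nonneg _)
    exact (pow_le_pow_iff_left₀ hpos hpos2 (by norm_num)).mp h2
  calc ‖∑ k : Fin n, S k * y k‖ ≤ (∑ k : Fin n, ‖S k‖) * ‖y‖ := h1
    _ ≤ ((n : ℝ) ^ ((3:ℝ)/2) * ‖x‖) * ‖y‖ :=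
        mul_le_mul_of_nonneg_right hT (norm_nonneg _)
    _ = (n : ℝ) ^ ((3:ℝ)/2) * ‖x‖ * ‖y‖ := by ring


def U (hn : n ≠ 0) : (Fin n → ℂ) →L[ℂ] (Fin n → ℂ) →L[ℂ] ℂ :=
  LinearMap.mkContinuous₂ (B n) ((n : ℝ) ^ ((3:ℝ)/2)) (fun x y => by
    simpa only [B, LinearMap.mk₂_apply] using norm_bound n hn x y)

lemma U_norm (hn : n ≠ 0) : ‖U n hn‖ ≤ (n : ℝ) ^ ((3:ℝ)/2) :=
  LinearMap.mkContinuous₂_norm_le _ (Real.rpow_nonneg (Nat.cast_nonneg n) _) _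

lemma U_single (hn : n ≠ 0) (i j : Fin n) :
    U n hn (Pi.single i 1) (Pi.single j 1) = a n i j := by
  have : U n hn (Pi.single i 1) (Pi.single j 1)
      = ∑ j' : Fin n, ∑ k : Fin n, a n j' k * (Pi.single i 1 : Fin n → ℂ) j'
          * (Pi.single j 1 : Fin n → ℂ) k := rfl
  rw [this]
  simp [Pi.single_apply, mul_ite, ite_mul, Finset.sum_ite_eq]

lemma U_single_norm (hn : n ≠ 0) (i j : Fin n) :
    ‖U n hn (Pi.single i 1) (Pi.single j 1)‖ = 1 := by
  rw [U_single n hn i j, a, norm_pow, zeta_norm n hn, one_pow]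

end LW


/-- **Optimality of the exponent 4/3 in Littlewood's inequality.** If `q > 0` and there is a
constant `C₁ > 0` such that `(Σ_{i,j=1}^N |U(e_i,e_j)|^q)^{1/q} ≤ C₁ ‖U‖` for every positive
integer `N` and every bilinear form `U : ℓ_∞^N × ℓ_∞^N → ℂ`, then `q ≥ 4/3`. -/
theorem littlewood_exponent_optimal (q : ℝ) (hq : 0 < q) (C₁ : ℝ) (hC₁ : 0 < C₁)
    (h : ∀ (N : ℕ), 0 < N → ∀ U : (Fin N → ℂ) →L[ℂ] (Fin N → ℂ) →L[ℂ] ℂ,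
      (∑ i : Fin N, ∑ j : Fin N,
          ‖U (Pi.single i 1) (Pi.single j 1)‖ ^ q) ^ (1 / q) ≤ C₁ * ‖U‖) :
    4 / 3 ≤ q := by
  by_contra hlt
  push_neg at hlt
  set ε : ℝ := 2/q - 3/2 with hε
  have hεpos : 0 < ε := by
    rw [hε, sub_pos, div_lt_div_iff₀ (by norm_num) hq]
    linarith
  have key : ∀ N : ℕ, 0 < N → (N : ℝ) ^ ((2:ℝ)/q) ≤ C₁ * (N : ℝ) ^ ((3:ℝ)/2) := by
    intro N hN
    have hNne : N ≠ 0 := hN.ne'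
    have hh := h N hN (LW.U N hNne)
    have hL : (∑ i : Fin N, ∑ j : Fin N,
        ‖LW.U N hNne (Pi.single i 1) (Pi.single j 1)‖ ^ q) = (N : ℝ) * (N : ℝ) := by
      have : ∀ i j : Fin N, ‖LW.U N hNne (Pi.single i 1) (Pi.single j 1)‖ ^ q = 1 := by
        intro i j
        rw [LW.U_single_norm N hNne i j, Real.one_rpow]
      rw [Finset.sum_congr rfl fun i _ => Finset.sum_congr rfl fun j _ => this i j]
      simp [Finset.sum_const, mul_comm]
    rw [hL] at hh
    have hNpos : (0:ℝ) ≤ (N : ℝ) := Nat.cast_nonneg N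
    have hL2 : ((N : ℝ) * (N : ℝ)) ^ ((1:ℝ)/q) = (N : ℝ) ^ ((2:ℝ)/q) := by
      have e1 : (N : ℝ) * (N : ℝ) = (N : ℝ) ^ (2:ℝ) := by
        rw [Real.rpow_two]; ring
      rw [e1, ← Real.rpow_mul hNpos, mul_one_div]
    rw [hL2] at hh
    calc (N : ℝ) ^ ((2:ℝ)/q) ≤ C₁ * ‖LW.U N hNne‖ := hh
      _ ≤ C₁ * (N : ℝ) ^ ((3:ℝ)/2) :=
          mul_le_mul_of_nonneg_left (LW.U_norm N hNne) hC₁.le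
  have key2 : ∀ N : ℕ, 0 < N → (N : ℝ) ^ ε ≤ C₁ := by
    intro N hN
    have hNpos : (0:ℝ) < (N : ℝ) := by exact_mod_cast hN
    have h32 : (0:ℝ) < (N : ℝ) ^ ((3:ℝ)/2) := Real.rpow_pos_of_pos hNpos _
    have hsplit : (N : ℝ) ^ ((2:ℝ)/q) = (N : ℝ) ^ ε * (N : ℝ) ^ ((3:ℝ)/2) := by
      rw [← Real.rpow_add hNpos, hε]
      ring_nf
    have := key N hN
    rw [hsplit] at this
    exact le_of_mul_le_mul_right (by linarith) h32
  set N : ℕ := max 1 ⌈(C₁ + 1) ^ (1/ε)⌉₊ with hN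
  have hN1 : 0 < N := lt_of_lt_of_le one_pos (le_max_left _ _)
  have hNc : (C₁ + 1) ^ (1/ε) ≤ (N : ℝ) := by
    calc (C₁ + 1) ^ (1/ε) ≤ (⌈(C₁ + 1) ^ (1/ε)⌉₊ : ℝ) := Nat.le_ceil _
      _ ≤ (N : ℝ) := by exact_mod_cast le_max_right 1 _
  have hfinal : C₁ + 1 ≤ C₁ := by
    have h0 : (0:ℝ) ≤ (C₁ + 1) ^ (1/ε) := Real.rpow_nonneg (by linarith) _
    calc C₁ + 1 = ((C₁ + 1) ^ (1/ε)) ^ ε := by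
          rw [← Real.rpow_mul (by linarith), one_div_mul_cancel hεpos.ne', Real.rpow_one]
      _ ≤ (N : ℝ) ^ ε := Real.rpow_le_rpow h0 hNc hεpos.le
      _ ≤ C₁ := key2 N hN1
  linarith
end LW
end

section
/- (Kahane–Salem–Zygmund inequality, multilinear version) For all positive integers m and n there exists a choice of signs (ε_i)_{i ∈ M(m,n)} with each ε_i ∈ {−1, +1} such that the m-linear form T_{m,n} : ℓ_∞^n × ⋯ × ℓ_∞^n → 𝕂 defined by T_{m,n}(z^{(1)}, ..., z^{(m)}) = Σ_{i ∈ M(m,n)} ε_i z^{(1)}_{i_1} ⋯ z^{(m)}_{i_m} satisfies ‖T_{m,n}‖ ≤ √(32 log(6m)) · n^{(m+1)/2} · √(m!). -/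
/-!
For a fixed vector `y` with `|y i| ≤ 1` on `N` indices, the Chernoff bound says that the
Rademacher sum `∑ ε_i y_i` exceeds `t` in modulus for at most a fraction `2 exp(-t² / 2N)` of
the sign choices `ε`. A real multilinear form attains its maximum modulus on the cube at a
vertex, so over ℝ it suffices to control `2^{mn}` test vectors `i ↦ ∏_k s_k(i_k)`, one for each
vertex `s`; with `N = n^m` and `t² = 2 log 2 (mn + 2) N` the union bound leaves a good choice
of signs. Splitting each complex variable into real and imaginary parts costs a factor `2^m`,
which `√(32 log (6m) m!)` absorbs.
-/

open Finset Real
open scoped Nat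

namespace KSZ

def boolSign (b : Bool) : ℝ := if b then 1 else -1

@[simp] lemma boolSign_true : boolSign true = 1 := rfl

@[simp] lemma boolSign_false : boolSign false = -1 := rfl

@[simp] lemma abs_boolSign (b : Bool) : |boolSign b| = 1 := by cases b <;> simp

section Chernoff

variable {I : Type*} [Fintype I] [DecidableEq I]

lemma sum_exp_mul_sum_boolSign (L : ℝ) (x : I → ℝ) :
    ∑ e : I → Bool, exp (L * ∑ i, boolSign (e i) * x i) = ∏ i, 2 * cosh (L * x i) := by
  simp only [mul_sum, exp_sum]
  rw [← Fintype.prod_sum fun i b => exp (L * (boolSign b * x i))]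
  refine Fintype.prod_congr _ _ fun i => ?_
  simp [cosh_eq]
  ring

lemma sum_exp_mul_sum_boolSign_le (L : ℝ) {x : I → ℝ} (hx : ∀ i, |x i| ≤ 1) :
    ∑ e : I → Bool, exp (L * ∑ i, boolSign (e i) * x i) ≤
      2 ^ Fintype.card I * exp (Fintype.card I * L ^ 2 / 2) := by
  have hcosh (i : I) : cosh (L * x i) ≤ exp (L ^ 2 / 2) := by
    refine (cosh_le_exp_half_sq _).trans (exp_le_exp.mpr ?_)
    have : x i ^ 2 ≤ 1 := by simpa using sq_le_sq' (abs_le.mp (hx i)).1 (abs_le.mp (hx i)).2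
    nlinarith [sq_nonneg L]
  calc ∑ e : I → Bool, exp (L * ∑ i, boolSign (e i) * x i)
      = ∏ i, 2 * cosh (L * x i) := sum_exp_mul_sum_boolSign L x
    _ ≤ ∏ _i : I, 2 * exp (L ^ 2 / 2) :=
        prod_le_prod (fun i _ => by positivity) fun i _ => by gcongr; exact hcosh i
    _ = 2 ^ Fintype.card I * exp (Fintype.card I * L ^ 2 / 2) := by
        rw [prod_const, card_univ, mul_pow, ← exp_nat_mul, mul_div_assoc]

lemma card_lt_sum_boolSign_le {x : I → ℝ} (hx : ∀ i, |x i| ≤ 1) {t : ℝ} (ht : 0 ≤ t) :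
    (#{e : I → Bool | t < ∑ i, boolSign (e i) * x i} : ℝ) ≤
      2 ^ Fintype.card I * exp (-t ^ 2 / (2 * Fintype.card I)) := by
  set N : ℝ := (Fintype.card I : ℝ)
  set L := t / N
  have markov : (#{e : I → Bool | t < ∑ i, boolSign (e i) * x i} : ℝ) * exp (L * t) ≤
      ∑ e : I → Bool, exp (L * ∑ i, boolSign (e i) * x i) := by
    rw [← nsmul_eq_mul]
    refine (card_nsmul_le_sum _ _ _ fun e he => ?_).trans
      (sum_le_sum_of_subset_of_nonneg (filter_subset _ _) fun _ _ _ => (exp_pos _).le)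
    exact exp_le_exp.mpr (mul_le_mul_of_nonneg_left (mem_filter.mp he).2.le (by positivity))
  have hexp : N * L ^ 2 / 2 - L * t = -t ^ 2 / (2 * N) := by
    rcases eq_or_ne N 0 with hN | hN
    · simp [L, hN]
    · simp only [L]; field_simp; ring
  rw [← hexp, sub_eq_add_neg, exp_add, exp_neg, ← mul_assoc, le_mul_inv_iff₀ (exp_pos _)]
  exact markov.trans (sum_exp_mul_sum_boolSign_le L hx)

lemma card_lt_abs_sum_boolSign_le {x : I → ℝ} (hx : ∀ i, |x i| ≤ 1) {t : ℝ} (ht : 0 ≤ t) :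
    (#{e : I → Bool | t < |∑ i, boolSign (e i) * x i|} : ℝ) ≤
      2 * (2 ^ Fintype.card I * exp (-t ^ 2 / (2 * Fintype.card I))) := by
  have hneg : ∀ e : I → Bool,
      -∑ i, boolSign (e i) * x i = ∑ i, boolSign (e i) * (-x i) := by
    intro e; simp [sum_neg_distrib]
  simp only [lt_abs, hneg, filter_or]
  calc _ ≤ (#{e : I → Bool | t < ∑ i, boolSign (e i) * x i} : ℝ) +
        #{e : I → Bool | t < ∑ i, boolSign (e i) * (-x i)} := mod_cast card_union_le _ _
    _ ≤ _ := by
      rw [two_mul]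
      exact add_le_add (card_lt_sum_boolSign_le hx ht)
        (card_lt_sum_boolSign_le (fun i => (abs_neg (x i)).trans_le (hx i)) ht)

lemma exists_forall_abs_sum_boolSign_le {S : Type*} [Fintype S] (y : S → I → ℝ)
    (hy : ∀ s i, |y s i| ≤ 1) {t : ℝ} (ht : 0 ≤ t)
    (hS : 2 * Fintype.card S < exp (t ^ 2 / (2 * Fintype.card I))) :
    ∃ e : I → Bool, ∀ s, |∑ i, boolSign (e i) * y s i| ≤ t := by
  by_contra! hbad
  have hcover : (univ : Finset (I → Bool)) ⊆
      univ.biUnion fun s => {e : I → Bool | t < |∑ i, boolSign (e i) * y s i|} := by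
    intro e _
    obtain ⟨s, hs⟩ := hbad e
    simpa using ⟨s, hs⟩
  have hcard := (card_le_card hcover).trans card_biUnion_le
  rw [card_univ, Fintype.card_fun, Fintype.card_bool] at hcard
  have : (2 : ℝ) ^ Fintype.card I ≤
      Fintype.card S * (2 * (2 ^ Fintype.card I * exp (-t ^ 2 / (2 * Fintype.card I)))) := by
    calc (2 : ℝ) ^ Fintype.card I ≤ ∑ s : S,
          (#{e : I → Bool | t < |∑ i, boolSign (e i) * y s i|} : ℝ) := mod_cast hcard
      _ ≤ _ := by
        simpa using sum_le_sum fun s (_ : s ∈ univ) => card_lt_abs_sum_boolSign_le (hy s) ht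
  rw [neg_div, exp_neg] at this
  have h2 : (0 : ℝ) < 2 ^ Fintype.card I := by positivity
  have he := exp_pos (t ^ 2 / (2 * Fintype.card I))
  field_simp at this
  nlinarith

end Chernoff

section MultilinearSum

variable {R : Type*} [CommSemiring R] {κ ι : Type*} [Fintype κ] [DecidableEq κ] [Fintype ι]

def multilinearSum (a : (κ → ι) → R) (y : κ → ι → R) : R := ∑ i, a i * ∏ k, y k (i k)

lemma multilinearSum_sum_mul {J : Type*} [Fintype J] (w : J → R) (a : J → (κ → ι) → R)
    (y : κ → ι → R) :
    multilinearSum (fun i => ∑ j, w j * a j i) y = ∑ j, w j * multilinearSum (a j) y := by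
  simp only [multilinearSum, sum_mul, mul_sum, mul_assoc]
  exact sum_comm

lemma multilinearSum_succ {m : ℕ} (a : (Fin (m + 1) → ι) → R) (y : Fin (m + 1) → ι → R) :
    multilinearSum a y =
      ∑ j, y 0 j * multilinearSum (fun i => a (Fin.cons j i)) (fun k => y k.succ) := by
  rw [multilinearSum, ← (Fin.consEquiv fun _ => ι).sum_comp, Fintype.sum_prod_type]
  refine sum_congr rfl fun j _ => ?_
  simp only [multilinearSum, mul_sum]
  refine sum_congr rfl fun i _ => ?_
  simp only [Fin.consEquiv, Equiv.coe_fn_mk, Fin.prod_univ_succ, Fin.cons_zero, Fin.cons_succ]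
  ring

end MultilinearSum

variable {ι : Type*} [Fintype ι]

lemma abs_sum_mul_le_sum_boolSign_mul (c x : ι → ℝ) (hx : ∀ j, |x j| ≤ 1) :
    |∑ j, x j * c j| ≤ ∑ j, boolSign (decide (0 ≤ c j)) * c j := by
  calc |∑ j, x j * c j| ≤ ∑ j, |x j| * |c j| := by
        simpa only [abs_mul] using abs_sum_le_sum_abs (fun j => x j * c j) univ
    _ ≤ ∑ j, |c j| := sum_le_sum fun j _ =>
        mul_le_of_le_one_left (abs_nonneg _) (hx j)
    _ = ∑ j, boolSign (decide (0 ≤ c j)) * c j := sum_congr rfl fun j _ => by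
        rcases le_or_gt 0 (c j) with h | h
        · simp [h, abs_of_nonneg h]
        · simp [h.not_ge, abs_of_neg h]

lemma exists_abs_multilinearSum_le_boolSign {m : ℕ} (a : (Fin m → ι) → ℝ)
    (x : Fin m → ι → ℝ) (hx : ∀ k j, |x k j| ≤ 1) :
    ∃ s : Fin m → ι → Bool,
      |multilinearSum a x| ≤ |multilinearSum a fun k j => boolSign (s k j)| := by
  induction m with
  | zero => exact ⟨finZeroElim, le_rfl⟩
  | succ m ih =>
    set c : ι → ℝ := fun j => multilinearSum (fun i => a (Fin.cons j i)) fun k => x k.succ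
    set σ : ι → Bool := fun j => decide (0 ≤ c j)
    obtain ⟨s, hs⟩ := ih (fun i => ∑ j, boolSign (σ j) * a (Fin.cons j i)) (fun k => x k.succ)
      fun k => hx k.succ
    refine ⟨Fin.cons σ s, ?_⟩
    -- the form is affine in the first row; replacing it by the signs of its coefficients
    -- can only increase the modulus
    have hσ := abs_sum_mul_le_sum_boolSign_mul c (x 0) (hx 0)
    calc |multilinearSum a x| = |∑ j, x 0 j * c j| := by rw [multilinearSum_succ]
      _ ≤ ∑ j, boolSign (σ j) * c j := hσ
      _ = |multilinearSum (fun i => ∑ j, boolSign (σ j) * a (Fin.cons j i)) fun k => x k.succ| := by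
        rw [multilinearSum_sum_mul, abs_of_nonneg ((abs_nonneg _).trans hσ)]
      _ ≤ |multilinearSum (fun i => ∑ j, boolSign (σ j) * a (Fin.cons j i))
            fun k j => boolSign (s k j)| := hs
      _ = _ := by
        rw [multilinearSum_sum_mul, multilinearSum_succ]
        simp only [Fin.cons_zero, Fin.cons_succ]

section RCLike

variable {𝕂 : Type*} [RCLike 𝕂]

lemma norm_I_le_one : ‖(RCLike.I : 𝕂)‖ ≤ 1 := by
  rw [RCLike.norm_I]; split_ifs <;> norm_num

lemma sum_bool_re_im (w : 𝕂) :
    ∑ b : Bool, ((if b then RCLike.re w else RCLike.im w : ℝ) : 𝕂) *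
      (if b then 1 else RCLike.I) = w := by
  simp

variable {κ : Type*} [Fintype κ] [DecidableEq κ]

/-- Writing each `z k j` as `re + im * I` expands the form into `2 ^ card κ` real forms, each
multiplied by a product of `1`s and `I`s. -/
lemma norm_multilinearSum_ofReal_le (a : (κ → ι) → ℝ) {C : ℝ}
    (hC : ∀ x : κ → ι → ℝ, (∀ k j, |x k j| ≤ 1) → |multilinearSum a x| ≤ C)
    (z : κ → ι → 𝕂) (hz : ∀ k j, ‖z k j‖ ≤ 1) :
    ‖multilinearSum (fun i => (a i : 𝕂)) z‖ ≤ 2 ^ Fintype.card κ * C := by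
  set x : (κ → Bool) → κ → ι → ℝ := fun p k j =>
    if p k then RCLike.re (z k j) else RCLike.im (z k j)
  set u : (κ → Bool) → 𝕂 := fun p => ∏ k, if p k then 1 else RCLike.I
  have hx (p : κ → Bool) (k : κ) (j : ι) : |x p k j| ≤ 1 := by
    by_cases h : p k
    · simpa [x, h] using (RCLike.abs_re_le_norm _).trans (hz k j)
    · simpa [x, h] using (RCLike.abs_im_le_norm _).trans (hz k j)
  have hu (p : κ → Bool) : ‖u p‖ ≤ 1 := by
    simp only [u, norm_prod]
    exact prod_le_one (fun _ _ => norm_nonneg _) fun k _ => by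
      split_ifs <;> simp [norm_I_le_one]
  have hsplit : multilinearSum (fun i => (a i : 𝕂)) z =
      ∑ p, ((multilinearSum a (x p) : ℝ) : 𝕂) * u p := by
    have hprod (i : κ → ι) : ∏ k, z k (i k) = ∑ p, ((∏ k, x p k (i k) : ℝ) : 𝕂) * u p := by
      conv_lhs => enter [2, k]; rw [← sum_bool_re_im (z k (i k))]
      simp only [Fintype.prod_sum, prod_mul_distrib, RCLike.ofReal_prod, u, x]
    simp only [multilinearSum, hprod, mul_sum, sum_mul, RCLike.ofReal_sum, RCLike.ofReal_mul]
    rw [sum_comm]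
    exact sum_congr rfl fun p _ => sum_congr rfl fun i _ => by ring
  calc ‖multilinearSum (fun i => (a i : 𝕂)) z‖
      ≤ ∑ p, ‖u p‖ * |multilinearSum a (x p)| := by
        rw [hsplit]
        refine (norm_sum_le _ _).trans_eq (sum_congr rfl fun p _ => ?_)
        rw [norm_mul, RCLike.norm_ofReal, mul_comm]
    _ ≤ ∑ _p : κ → Bool, C := sum_le_sum fun p _ =>
        (mul_le_of_le_one_left (abs_nonneg _) (hu p)).trans (hC _ (hx p))
    _ = 2 ^ Fintype.card κ * C := by simp

end RCLike

lemma add_two_mul_four_pow_le_factorial {m : ℕ} (hm : 3 ≤ m) : (m + 2) * 4 ^ m ≤ 64 * m ! := by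
  induction m, hm using Nat.le_induction with
  | base => decide
  | succ m hm ih =>
    rcases hm.eq_or_lt with rfl | hm
    · decide
    calc (m + 1 + 2) * 4 ^ (m + 1) = 4 * (m + 3) * 4 ^ m := by ring
      _ ≤ (m + 1) * (m + 2) * 4 ^ m := Nat.mul_le_mul_right _ (by nlinarith)
      _ = (m + 1) * ((m + 2) * 4 ^ m) := by ring
      _ ≤ (m + 1) * (64 * m !) := by gcongr
      _ = 64 * (m + 1)! := by rw [Nat.factorial_succ]; ring

lemma four_pow_mul_log_two_le {m : ℕ} (hm : 0 < m) :
    4 ^ m * (2 * log 2 * (m + 2)) ≤ 32 * log (6 * m) * m ! := by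
  have hlog (k : ℕ) (hk : 2 ^ k ≤ 6 * m) : k * log 2 ≤ log (6 * m) := by
    rw [← Real.log_pow]
    exact Real.log_le_log (by positivity) (by exact_mod_cast hk)
  have hl2 : 0 ≤ log 2 := Real.log_nonneg one_le_two
  rcases lt_or_ge m 3 with hm3 | hm3
  · have := hlog 2 (by omega)
    interval_cases m <;> norm_num [Nat.factorial] at this ⊢ <;> nlinarith
  · have := hlog 4 (by omega)
    have hfac : ((m : ℝ) + 2) * 4 ^ m ≤ 64 * m ! := mod_cast add_two_mul_four_pow_le_factorial hm3
    push_cast at this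
    nlinarith [Nat.factorial_pos m]

lemma two_pow_mul_sqrt_le {m n : ℕ} (hm : 0 < m) (hn : 0 < n) :
    2 ^ m * √(2 * log 2 * (m * n + 2) * n ^ m) ≤
      √(32 * log (6 * m)) * (n : ℝ) ^ (((m : ℝ) + 1) / 2) * √(m ! : ℝ) := by
  have hn1 : (1 : ℝ) ≤ n := mod_cast hn
  have hrpow : (n : ℝ) ^ (((m : ℝ) + 1) / 2) = √((n : ℝ) ^ (m + 1)) := by
    rw [sqrt_eq_rpow, ← rpow_natCast, ← rpow_mul (by positivity)]
    push_cast; ring_nf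
  have hlhs : (2 : ℝ) ^ m = √(4 ^ m) := by
    rw [show (4 : ℝ) ^ m = (2 ^ m) ^ 2 by rw [← pow_mul, mul_comm, pow_mul]; norm_num,
      sqrt_sq (by positivity)]
  have hlog6 : 0 ≤ log (6 * m) := Real.log_nonneg (by
    have : (1 : ℝ) ≤ m := mod_cast hm
    linarith)
  rw [hrpow, hlhs, ← sqrt_mul (by positivity), ← sqrt_mul (by positivity : 0 ≤ 32 * log (6 * m)),
    ← sqrt_mul (by positivity)]
  refine sqrt_le_sqrt ?_
  have hmn : (m : ℝ) * n + 2 ≤ (m + 2) * n := by nlinarith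
  calc 4 ^ m * (2 * log 2 * (m * n + 2) * n ^ m)
      ≤ 4 ^ m * (2 * log 2 * ((m + 2) * n) * n ^ m) := by gcongr
    _ = 4 ^ m * (2 * log 2 * (m + 2)) * n ^ (m + 1) := by ring
    _ ≤ 32 * log (6 * m) * m ! * n ^ (m + 1) := by gcongr ?_ * _; exact four_pow_mul_log_two_le hm
    _ = 32 * log (6 * m) * n ^ (m + 1) * m ! := by ring

end KSZ

open KSZ in
/-- **Kahane–Salem–Zygmund inequality (multilinear version).** For all positive integers `m`
and `n` there is a choice of signs `(ε_i)_{i ∈ M(m,n)}`, `ε_i ∈ {−1,+1}`, such that the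
`m`-linear form `T(z^{(1)},…,z^{(m)}) = Σ_i ε_i z^{(1)}_{i_1} ⋯ z^{(m)}_{i_m}` on
`ℓ_∞^n × ⋯ × ℓ_∞^n` satisfies `‖T‖ ≤ √(32 log(6m)) n^{(m+1)/2} √(m!)`, i.e. `|T(z)|` is at
most this bound whenever all `‖z^{(k)}‖_∞ ≤ 1`. -/
theorem ksz_multilinear {𝕂 : Type*} [RCLike 𝕂] (m n : ℕ) (hm : 0 < m) (hn : 0 < n) :
    ∃ ε : (Fin m → Fin n) → 𝕂, (∀ i, ε i = 1 ∨ ε i = -1) ∧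
      ∀ z : Fin m → Fin n → 𝕂, (∀ k j, ‖z k j‖ ≤ 1) →
        ‖∑ i : Fin m → Fin n, ε i * ∏ k : Fin m, z k (i k)‖ ≤
          Real.sqrt (32 * Real.log (6 * m)) * (n : ℝ) ^ (((m : ℝ) + 1) / 2) *
            Real.sqrt (Nat.factorial m) := by
  set t := √(2 * log 2 * (m * n + 2) * n ^ m)
  have hS : 2 * Fintype.card (Fin m → Fin n → Bool) <
      exp (t ^ 2 / (2 * Fintype.card (Fin m → Fin n))) := by
    have : t ^ 2 / (2 * Fintype.card (Fin m → Fin n)) = ((m * n + 2 : ℕ) : ℝ) * log 2 := by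
      rw [sq_sqrt (by positivity)]
      simp only [Fintype.card_fun, Fintype.card_fin]
      push_cast
      field_simp
    rw [this, exp_nat_mul, exp_log two_pos]
    simp only [Fintype.card_fun, Fintype.card_fin, Fintype.card_bool]
    push_cast
    rw [← pow_mul, mul_comm n m, pow_add]
    linarith [pow_pos (two_pos (α := ℝ)) (m * n)]
  obtain ⟨e, he⟩ := exists_forall_abs_sum_boolSign_le
    (fun (s : Fin m → Fin n → Bool) i => ∏ k, boolSign (s k (i k)))
    (fun s i => by simp [abs_prod]) (sqrt_nonneg _) hS
  have hreal (x : Fin m → Fin n → ℝ) (hx : ∀ k j, |x k j| ≤ 1) :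
      |multilinearSum (fun i => boolSign (e i)) x| ≤ t :=
    let ⟨s, hs⟩ := exists_abs_multilinearSum_le_boolSign _ x hx
    hs.trans (he s)
  refine ⟨fun i => (boolSign (e i) : 𝕂), fun i => by cases h : e i <;> simp [h], fun z hz => ?_⟩
  calc _ ≤ 2 ^ m * t :=
        (norm_multilinearSum_ofReal_le _ hreal z hz).trans_eq (by rw [Fintype.card_fin])
    _ ≤ _ := two_pow_mul_sqrt_le hm hn
end

section
/- (Polynomial Bohnenblust–Hille inequality via polarization) Let m be a positive integer and suppose C ≥ 1 is a constant such that for every positive integer n and every m-linear form L : ℓ_∞^n × ⋯ × ℓ_∞^n → ℂ one has (Σ_{i_1,...,i_m=1}^n |L(e_{i_1},...,e_{i_m})|^{2m/(m+1)})^{(m+1)/(2m)} ≤ C‖L‖. Then for every positive integer n and every m-homogeneous polynomial P(z) = Σ_{|α|=m} a_α z^α on ℂ^n, one has (Σ_{|α|=m} |a_α|^{2m/(m+1)})^{(m+1)/(2m)} ≤ C · m^m / (m!)^{(m+1)/(2m)} · ‖P‖. -/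
/-!
Spread each coefficient `a α` evenly over the index maps `i : Fin m → Fin n` with exponent `α`
(there are between `1` and `m!` of them). The resulting coefficients `c i` are invariant under
permutations of `Fin m` and define a symmetric `m`-linear form `L` with `L (z, …, z) = P z` and
`L (e_{i 1}, …, e_{i m}) = c i`. The polarization formula
`2^m m! L x = ∑_ε ε₁⋯εₘ L (∑ₖ εₖ xₖ, …, ∑ₖ εₖ xₖ)` gives `‖L‖ ≤ m^m / m! ‖P‖`, and the bound `m!` on
the fibre sizes gives `∑ |a α|^ρ ≤ (m!)^(ρ-1) ∑ |c i|^ρ` for `ρ = 2m/(m+1) ≥ 1`. Applying the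
multilinear inequality to `L` and combining these yields the constant, since
`(m!)^((ρ-1)/ρ) / m! = (m!)^(-(m+1)/(2m))`.
-/

open Finset

namespace PolynomialBH

section MultiIndex

variable {ι κ : Type*} [Fintype ι] [DecidableEq κ]

def multiIndex (i : ι → κ) (j : κ) : ℕ := #{k | i k = j}

lemma sum_multiIndex [Fintype κ] (i : ι → κ) : ∑ j, multiIndex i j = Fintype.card ι := by
  simpa [multiIndex] using (card_eq_sum_card_fiberwise (f := i) (s := univ) (t := univ)
    fun _ _ => mem_univ _).symm

lemma multiIndex_mem_antidiagonalTuple {m n : ℕ} (i : Fin m → Fin n) :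
    multiIndex i ∈ Nat.antidiagonalTuple n m := by
  rw [Nat.mem_antidiagonalTuple, sum_multiIndex, Fintype.card_fin]

lemma prod_comp_eq_prod_pow_multiIndex [Fintype κ] {M : Type*} [CommMonoid M] (z : κ → M)
    (i : ι → κ) : ∏ k, z (i k) = ∏ j, z j ^ multiIndex i j := by
  rw [← prod_fiberwise_of_maps_to (fun k _ => mem_univ (i k))]
  refine prod_congr rfl fun j _ => ?_
  rw [prod_congr rfl fun k hk => by rw [(mem_filter.mp hk).2], prod_const]
  rfl

lemma multiIndex_comp_perm (i : ι → κ) (σ : Equiv.Perm ι) : multiIndex (i ∘ σ) = multiIndex i := by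
  funext j
  exact card_equiv σ fun k => by simp

lemma multiIndex_eq_zero_of_notMem_range {i : ι → κ} {j : κ} (hj : j ∉ Set.range i) :
    multiIndex i j = 0 := by
  simpa [multiIndex, filter_eq_empty_iff] using fun k hk => hj ⟨k, hk⟩

lemma multiIndex_eq_one_of_bijective {r : ι → ι} [DecidableEq ι] (hr : r.Bijective) (j : ι) :
    multiIndex r j = 1 := by
  rw [multiIndex, card_eq_one]
  obtain ⟨k, rfl⟩ := hr.2 j
  exact ⟨k, by ext l; simp [hr.1.eq_iff]⟩

lemma exists_multiIndex_eq [Fintype κ] {α : κ → ℕ} (hα : ∑ j, α j = Fintype.card ι) :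
    ∃ i : ι → κ, multiIndex i = α := by
  obtain ⟨e⟩ : Nonempty ((Σ j, Fin (α j)) ≃ ι) := Fintype.card_eq.mp (by simpa using hα)
  refine ⟨fun k => (e.symm k).1, funext fun j => ?_⟩
  rw [multiIndex, ← Fintype.card_subtype]
  calc Fintype.card {k // (e.symm k).1 = j}
      = Fintype.card {p : Σ j, Fin (α j) // p.1 = j} :=
        Fintype.card_congr (e.symm.subtypeEquiv fun _ => Iff.rfl)
    _ = α j := by
        rw [Fintype.card_congr (Equiv.sigmaSubtype j), Fintype.card_fin]

lemma exists_perm_of_multiIndex_eq {i i' : ι → κ} (h : multiIndex i = multiIndex i') :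
    ∃ σ : Equiv.Perm ι, i' ∘ σ = i := by
  have hcard (j : κ) : Fintype.card {k // i k = j} = Fintype.card {k // i' k = j} := by
    rw [Fintype.card_subtype, Fintype.card_subtype]
    exact congrFun h j
  let e (j : κ) : {k // i k = j} ≃ {k // i' k = j} := Fintype.equivOfCardEq (hcard j)
  refine ⟨(Equiv.sigmaFiberEquiv i).symm.trans
    ((Equiv.sigmaCongrRight e).trans (Equiv.sigmaFiberEquiv i')), funext fun k => ?_⟩
  exact (e (i k) ⟨k, rfl⟩).2

variable (ι) [DecidableEq ι] [Fintype κ]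

def multiIndexFiber (α : κ → ℕ) : Finset (ι → κ) := {i | multiIndex i = α}

variable {ι}

lemma card_multiIndexFiber_pos {α : κ → ℕ} (hα : ∑ j, α j = Fintype.card ι) :
    0 < #(multiIndexFiber ι α) := by
  obtain ⟨i, hi⟩ := exists_multiIndex_eq hα
  exact card_pos.mpr ⟨i, by simp [multiIndexFiber, hi]⟩

lemma card_multiIndexFiber_le_factorial (α : κ → ℕ) :
    #(multiIndexFiber ι α) ≤ (Fintype.card ι).factorial := by
  rcases (multiIndexFiber ι α).eq_empty_or_nonempty with hempty | ⟨i₀, hi₀⟩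
  · simp [hempty]
  have hsub : multiIndexFiber ι α ⊆ univ.image fun σ : Equiv.Perm ι => i₀ ∘ σ := by
    intro i hi
    simp only [multiIndexFiber, mem_filter, mem_univ, true_and] at hi hi₀
    obtain ⟨σ, hσ⟩ := exists_perm_of_multiIndex_eq (hi.trans hi₀.symm)
    exact mem_image.mpr ⟨σ, mem_univ _, hσ⟩
  calc #(multiIndexFiber ι α) ≤ #(univ.image fun σ : Equiv.Perm ι => i₀ ∘ σ) := card_le_card hsub
    _ ≤ Fintype.card (Equiv.Perm ι) := card_image_le
    _ = (Fintype.card ι).factorial := Fintype.card_perm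

lemma sum_comp_multiIndex {m n : ℕ} {M : Type*} [AddCommMonoid M] (f : (Fin n → ℕ) → M) :
    ∑ i : Fin m → Fin n, f (multiIndex i) =
      ∑ α ∈ Nat.antidiagonalTuple n m, #(multiIndexFiber (Fin m) α) • f α := by
  rw [← sum_fiberwise_of_maps_to fun i _ => multiIndex_mem_antidiagonalTuple i]
  refine sum_congr rfl fun α _ => ?_
  rw [sum_congr rfl fun i hi => by rw [(mem_filter.mp hi).2], sum_const]
  rfl

end MultiIndex

def boolSign {R : Type*} [Ring R] (b : Bool) : R := if b then 1 else -1

lemma sum_boolSign_pow_succ {R : Type*} [Ring R] (d : ℕ) :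
    ∑ b, (boolSign b : R) ^ (d + 1) = 1 - (-1) ^ d := by
  simp [boolSign, pow_succ, sub_eq_add_neg]

lemma norm_boolSign {R : Type*} [NormedRing R] [NormOneClass R] (b : Bool) :
    ‖(boolSign b : R)‖ = 1 := by
  cases b <;> simp [boolSign]

section Polarization

variable {ι R M N : Type*} [Fintype ι] [DecidableEq ι] [CommRing R]
  [AddCommGroup M] [Module R M] [AddCommGroup N] [Module R N]

lemma sum_prod_boolSign_mul_prod_boolSign_comp (r : ι → ι) :
    ∑ ε : ι → Bool, (∏ k, (boolSign (ε k) : R)) * ∏ s, boolSign (ε (r s)) =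
      if r.Bijective then 2 ^ Fintype.card ι else 0 := by
  have hmerge (ε : ι → Bool) : (∏ k, (boolSign (ε k) : R)) * ∏ s, boolSign (ε (r s)) =
      ∏ k, boolSign (ε k) ^ (multiIndex r k + 1) := by
    rw [prod_comp_eq_prod_pow_multiIndex (fun k => (boolSign (ε k) : R)) r, ← prod_mul_distrib]
    simp_rw [pow_succ, mul_comm]
  simp_rw [hmerge, ← Fintype.prod_sum (fun k b => (boolSign b : R) ^ (multiIndex r k + 1)),
    sum_boolSign_pow_succ]
  split_ifs with hr
  · simp [multiIndex_eq_one_of_bijective hr, one_add_one_eq_two]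
  · obtain ⟨k, hk⟩ : ∃ k, k ∉ Set.range r := by
      by_contra! hsurj
      exact hr (Finite.surjective_iff_bijective.mp hsurj)
    exact prod_eq_zero (mem_univ k) (by simp [multiIndex_eq_zero_of_notMem_range hk])

theorem polarization (f : MultilinearMap R (fun _ : ι => M) N)
    (hf : ∀ (σ : Equiv.Perm ι) (x : ι → M), f (x ∘ σ) = f x) (x : ι → M) :
    ∑ ε : ι → Bool, (∏ k, (boolSign (ε k) : R)) • f (fun _ => ∑ k, (boolSign (ε k) : R) • x k) =
      (2 ^ Fintype.card ι * (Fintype.card ι).factorial : R) • f x := by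
  have hexpand (ε : ι → Bool) : f (fun _ => ∑ k, (boolSign (ε k) : R) • x k) =
      ∑ r : ι → ι, (∏ s, (boolSign (ε (r s)) : R)) • f (x ∘ r) := by
    rw [f.map_sum fun _ k => (boolSign (ε k) : R) • x k]
    exact sum_congr rfl fun r _ => f.map_smul_univ _ _
  have hperm : ∑ r : ι → ι, (if r.Bijective then (2 : R) ^ Fintype.card ι else 0) • f (x ∘ r) =
      ∑ σ : Equiv.Perm ι, (2 : R) ^ Fintype.card ι • f x := by
    simp_rw [ite_smul, zero_smul]
    rw [← sum_filter, sum_subtype _ fun r => mem_filter_univ r]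
    exact Fintype.sum_equiv Equiv.bijectiveEquiv _ _ fun r =>
      congrArg _ (hf (Equiv.bijectiveEquiv r) x)
  simp_rw [hexpand, smul_sum, smul_smul]
  rw [sum_comm]
  simp_rw [← sum_smul, sum_prod_boolSign_mul_prod_boolSign_comp, hperm, sum_const, card_univ,
    Fintype.card_perm, ← Nat.cast_smul_eq_nsmul R, smul_smul, mul_comm]

end Polarization

lemma exists_eq_smul_of_norm_le {𝕜 E : Type*} [NormedField 𝕜] [NormedAddCommGroup E]
    [NormedSpace 𝕜 E] {c : 𝕜} {w : E} (hw : ‖w‖ ≤ ‖c‖) : ∃ z : E, ‖z‖ ≤ 1 ∧ w = c • z := by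
  rcases eq_or_ne c 0 with rfl | hc
  · exact ⟨0, by simp, by simpa using hw⟩
  refine ⟨c⁻¹ • w, ?_, (smul_inv_smul₀ hc w).symm⟩
  rw [norm_smul, norm_inv, inv_mul_le_one₀ (norm_pos_iff.mpr hc)]
  exact hw

section Norm

variable {𝕜 ι G : Type*} [RCLike 𝕜] [Fintype ι] [NormedAddCommGroup G] [NormedSpace 𝕜 G]

lemma opNorm_le_of_forall_norm_le_one {E : ι → Type*} [∀ i, NormedAddCommGroup (E i)]
    [∀ i, NormedSpace 𝕜 (E i)] (f : ContinuousMultilinearMap 𝕜 E G) {B : ℝ}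
    (h : ∀ x, ‖x‖ ≤ 1 → ‖f x‖ ≤ B) : ‖f‖ ≤ B := by
  have hB : 0 ≤ B := (norm_nonneg _).trans (h 0 (by simp))
  refine f.opNorm_le_bound hB fun x => ?_
  by_cases hx : ∃ i, x i = 0
  · obtain ⟨i, hi⟩ := hx
    rw [f.map_coord_zero i hi, norm_zero]
    positivity
  push Not at hx
  set y : ∀ i, E i := fun i => (‖x i‖⁻¹ : 𝕜) • x i
  have hy : ‖y‖ ≤ 1 :=
    (pi_norm_le_iff_of_nonneg zero_le_one).2 fun i => (norm_smul_inv_norm (hx i)).le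
  have hxy : x = fun i => (‖x i‖ : 𝕜) • y i := by
    funext i
    rw [smul_inv_smul₀ (RCLike.ofReal_ne_zero.mpr (norm_ne_zero_iff.mpr (hx i)))]
  calc ‖f x‖ = ‖f fun i => (‖x i‖ : 𝕜) • y i‖ := by rw [← hxy]
    _ = (∏ i, ‖x i‖) * ‖f y‖ := by
        rw [f.map_smul_univ, norm_smul, norm_prod]
        simp
    _ ≤ (∏ i, ‖x i‖) * B := by gcongr; exact h y hy
    _ = B * ∏ i, ‖x i‖ := mul_comm _ _

variable {E : Type*} [NormedAddCommGroup E] [NormedSpace 𝕜 E]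

lemma norm_apply_diag_le_of_norm_le (f : ContinuousMultilinearMap 𝕜 (fun _ : ι => E) G) {S : ℝ}
    (hS : ∀ z, ‖z‖ ≤ 1 → ‖f fun _ => z‖ ≤ S) {c : 𝕜} {w : E} (hw : ‖w‖ ≤ ‖c‖) :
    ‖f fun _ => w‖ ≤ ‖c‖ ^ Fintype.card ι * S := by
  obtain ⟨z, hz, rfl⟩ := exists_eq_smul_of_norm_le hw
  have := f.map_smul_univ (fun _ => c) fun _ => z
  rw [this, norm_smul, prod_const, card_univ, norm_pow]
  gcongr
  exact hS z hz

theorem opNorm_le_card_pow_div_factorial_mul_of_symmetric [DecidableEq ι]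
    (f : ContinuousMultilinearMap 𝕜 (fun _ : ι => E) G)
    (hf : ∀ (σ : Equiv.Perm ι) (x : ι → E), f (x ∘ σ) = f x) {S : ℝ}
    (hS : ∀ z, ‖z‖ ≤ 1 → ‖f fun _ => z‖ ≤ S) :
    ‖f‖ ≤ Fintype.card ι ^ Fintype.card ι / (Fintype.card ι).factorial * S := by
  set N := Fintype.card ι
  refine opNorm_le_of_forall_norm_le_one f fun x hx => ?_
  have hw (ε : ι → Bool) : ‖∑ k, (boolSign (ε k) : 𝕜) • x k‖ ≤ ‖(N : 𝕜)‖ := by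
    calc ‖∑ k, (boolSign (ε k) : 𝕜) • x k‖ ≤ ∑ k : ι, (1 : ℝ) := by
          refine norm_sum_le_of_le _ fun k _ => ?_
          rw [norm_smul, norm_boolSign, one_mul]
          exact (norm_le_pi_norm x k).trans hx
      _ = ‖(N : 𝕜)‖ := by simp [N]
  have key : (2 ^ N * N.factorial) * ‖f x‖ ≤ 2 ^ N * (N ^ N * S) := by
    calc (2 ^ N * N.factorial) * ‖f x‖ = ‖(2 ^ N * N.factorial : 𝕜) • f x‖ := by
          rw [norm_smul]
          norm_cast
      _ = ‖∑ ε : ι → Bool, (∏ k, (boolSign (ε k) : 𝕜)) •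
            f (fun _ => ∑ k, (boolSign (ε k) : 𝕜) • x k)‖ := by
          exact congrArg _ (polarization f.toMultilinearMap hf x).symm
      _ ≤ ∑ ε : ι → Bool, ‖f (fun _ => ∑ k, (boolSign (ε k) : 𝕜) • x k)‖ := by
          refine norm_sum_le_of_le _ fun ε _ => ?_
          rw [norm_smul, norm_prod]
          simp [norm_boolSign]
      _ ≤ ∑ ε : ι → Bool, N ^ N * S := by
          gcongr with ε
          simpa using norm_apply_diag_le_of_norm_le f hS (hw ε)
      _ = 2 ^ N * (N ^ N * S) := by simp [N]
  rw [div_mul_eq_mul_div, le_div_iff₀ (by positivity)]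
  nlinarith [pow_pos (two_pos : (0 : ℝ) < 2) N]

end Norm

section Coefficients

variable {𝕜 ι κ : Type*} [NontriviallyNormedField 𝕜] [Fintype ι] [DecidableEq ι] [Fintype κ]

noncomputable def multilinearOfCoeffs (c : (ι → κ) → 𝕜) :
    ContinuousMultilinearMap 𝕜 (fun _ : ι => κ → 𝕜) 𝕜 :=
  ∑ i, c i • (ContinuousMultilinearMap.mkPiAlgebra 𝕜 ι 𝕜).compContinuousLinearMap
    fun k => ContinuousLinearMap.proj (i k)

lemma multilinearOfCoeffs_apply (c : (ι → κ) → 𝕜) (x : ι → κ → 𝕜) :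
    multilinearOfCoeffs c x = ∑ i, c i * ∏ k, x k (i k) := by
  simp [multilinearOfCoeffs]

lemma multilinearOfCoeffs_apply_single [DecidableEq κ] (c : (ι → κ) → 𝕜) (i : ι → κ) :
    multilinearOfCoeffs c (fun k => Pi.single (i k) 1) = c i := by
  rw [multilinearOfCoeffs_apply, sum_eq_single i]
  · simp
  · intro i' _ hi'
    obtain ⟨k, hk⟩ := Function.ne_iff.mp hi'
    exact mul_eq_zero_of_right _ (prod_eq_zero (mem_univ k) (by simp [hk]))
  · simp

lemma multilinearOfCoeffs_comp_perm {c : (ι → κ) → 𝕜}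
    (hc : ∀ (i : ι → κ) (σ : Equiv.Perm ι), c (i ∘ σ) = c i) (σ : Equiv.Perm ι)
    (x : ι → κ → 𝕜) : multilinearOfCoeffs c (x ∘ σ) = multilinearOfCoeffs c x := by
  simp only [multilinearOfCoeffs_apply]
  refine Fintype.sum_equiv (σ.arrowCongr (Equiv.refl κ)) _ _ fun i => ?_
  rw [show σ.arrowCongr (Equiv.refl κ) i = i ∘ σ.symm from rfl, hc]
  congr 1
  exact Fintype.prod_equiv σ _ _ fun k => by simp

end Coefficients

lemma rpow_le_rpow_sub_one_mul_mul_div_rpow {t p N K : ℝ} (ht : 0 ≤ t) (hp : 1 ≤ p) (hN : 0 < N)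
    (hNK : N ≤ K) : t ^ p ≤ K ^ (p - 1) * (N * (t / N) ^ p) := by
  have hfactor : 1 ≤ K ^ (p - 1) * N ^ (1 - p) := by
    rw [show 1 - p = -(p - 1) by ring, Real.rpow_neg hN.le, ← div_eq_mul_inv,
      ← Real.div_rpow (hN.trans_le hNK).le hN.le]
    exact Real.one_le_rpow ((one_le_div hN).mpr hNK) (by linarith)
  calc t ^ p ≤ K ^ (p - 1) * N ^ (1 - p) * t ^ p :=
        le_mul_of_one_le_left (Real.rpow_nonneg ht p) hfactor
    _ = K ^ (p - 1) * (N * (t / N) ^ p) := by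
        rw [Real.div_rpow ht hN.le, Real.rpow_sub hN, Real.rpow_one]
        ring

section SymmetricCoefficients

variable {𝕜 : Type*} [RCLike 𝕜] {m n : ℕ}

noncomputable def symmCoeffs (a : (Fin n → ℕ) → 𝕜) (i : Fin m → Fin n) : 𝕜 :=
  a (multiIndex i) / #(multiIndexFiber (Fin m) (multiIndex i))

lemma symmCoeffs_comp_perm (a : (Fin n → ℕ) → 𝕜) (i : Fin m → Fin n) (σ : Equiv.Perm (Fin m)) :
    symmCoeffs a (i ∘ σ) = symmCoeffs a i := by
  rw [symmCoeffs, multiIndex_comp_perm, symmCoeffs]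

lemma multilinearOfCoeffs_symmCoeffs_apply_diag (a : (Fin n → ℕ) → 𝕜) (z : Fin n → 𝕜) :
    multilinearOfCoeffs (symmCoeffs (m := m) a) (fun _ => z) =
      ∑ α ∈ Nat.antidiagonalTuple n m, a α * ∏ j, z j ^ α j := by
  rw [multilinearOfCoeffs_apply]
  simp_rw [prod_comp_eq_prod_pow_multiIndex z, symmCoeffs]
  rw [sum_comp_multiIndex fun α => a α / #(multiIndexFiber (Fin m) α) * ∏ j, z j ^ α j]
  refine sum_congr rfl fun α hα => ?_
  have hpos := card_multiIndexFiber_pos (ι := Fin m)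
    (by simpa using Nat.mem_antidiagonalTuple.mp hα)
  have hne : (#(multiIndexFiber (Fin m) α) : 𝕜) ≠ 0 := by exact_mod_cast hpos.ne'
  rw [nsmul_eq_mul]
  field_simp

lemma sum_norm_rpow_le_mul_sum_norm_symmCoeffs_rpow (a : (Fin n → ℕ) → 𝕜) {p : ℝ} (hp : 1 ≤ p) :
    ∑ α ∈ Nat.antidiagonalTuple n m, ‖a α‖ ^ p ≤
      (m.factorial : ℝ) ^ (p - 1) * ∑ i : Fin m → Fin n, ‖symmCoeffs a i‖ ^ p := by
  simp_rw [symmCoeffs, norm_div, RCLike.norm_natCast]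
  rw [sum_comp_multiIndex fun α => (‖a α‖ / #(multiIndexFiber (Fin m) α)) ^ p, mul_sum]
  refine sum_le_sum fun α hα => ?_
  have hpos := card_multiIndexFiber_pos (ι := Fin m)
    (by simpa using Nat.mem_antidiagonalTuple.mp hα)
  have hle := card_multiIndexFiber_le_factorial (ι := Fin m) α
  rw [nsmul_eq_mul]
  exact rpow_le_rpow_sub_one_mul_mul_div_rpow (norm_nonneg _) hp (by exact_mod_cast hpos)
    (by simpa using hle)

end SymmetricCoefficients

lemma bddAbove_norm_sum_mul_prod_pow {𝕜 κ : Type*} [NormedField 𝕜] [Fintype κ]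
    (s : Finset (κ → ℕ)) (a : (κ → ℕ) → 𝕜) :
    BddAbove {x : ℝ | ∃ z : κ → 𝕜, (∀ k, ‖z k‖ ≤ 1) ∧ x = ‖∑ α ∈ s, a α * ∏ j, z j ^ α j‖} := by
  refine ⟨∑ α ∈ s, ‖a α‖, ?_⟩
  rintro x ⟨z, hz, rfl⟩
  refine norm_sum_le_of_le _ fun α _ => ?_
  rw [norm_mul, norm_prod]
  refine mul_le_of_le_one_right (norm_nonneg _) (prod_le_one (fun _ _ => norm_nonneg _) ?_)
  exact fun j _ => by simpa [norm_pow] using pow_le_one₀ (norm_nonneg _) (hz j)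

end PolynomialBH

open PolynomialBH

/-- **Polynomial Bohnenblust–Hille inequality via polarization.** Let `C ≥ 1` be a constant
for which the `m`-linear Bohnenblust–Hille inequality holds over `ℂ`. Then for every `n` and
every `m`-homogeneous polynomial `P(z) = Σ_{|α|=m} a_α z^α` on `ℂ^n`,
`(Σ_{|α|=m} |a_α|^{2m/(m+1)})^{(m+1)/(2m)} ≤ C m^m/(m!)^{(m+1)/(2m)} ‖P‖`,
where `‖P‖` is the supremum of `|P(z)|` over the closed unit polydisk. -/
theorem polynomial_bh_of_multilinear_bh (m : ℕ) (hm : 0 < m) (C : ℝ) (hC : 1 ≤ C)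
    (h : ∀ (n : ℕ) (L : ContinuousMultilinearMap ℂ (fun _ : Fin m => (Fin n → ℂ)) ℂ),
      (∑ i : Fin m → Fin n,
          ‖L (fun k => Pi.single (i k) 1)‖ ^ (2 * (m : ℝ) / ((m : ℝ) + 1))) ^
          (((m : ℝ) + 1) / (2 * (m : ℝ))) ≤ C * ‖L‖)
    (n : ℕ) (a : (Fin n → ℕ) → ℂ) :
    (∑ α ∈ Finset.Nat.antidiagonalTuple n m,
        ‖a α‖ ^ (2 * (m : ℝ) / ((m : ℝ) + 1))) ^ (((m : ℝ) + 1) / (2 * (m : ℝ))) ≤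
      C * (m : ℝ) ^ m / (Nat.factorial m : ℝ) ^ (((m : ℝ) + 1) / (2 * (m : ℝ))) *
        sSup {x : ℝ | ∃ z : Fin n → ℂ, (∀ k, ‖z k‖ ≤ 1) ∧
          x = ‖∑ α ∈ Finset.Nat.antidiagonalTuple n m,
                a α * ∏ j : Fin n, z j ^ α j‖} := by
  set p : ℝ := 2 * m / (m + 1)
  set q : ℝ := (m + 1) / (2 * m)
  set K : ℝ := (m.factorial : ℝ)
  set S := sSup {x : ℝ | ∃ z : Fin n → ℂ, (∀ k, ‖z k‖ ≤ 1) ∧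
    x = ‖∑ α ∈ Finset.Nat.antidiagonalTuple n m, a α * ∏ j : Fin n, z j ^ α j‖}
  set L := multilinearOfCoeffs (symmCoeffs (m := m) a)
  have hm1 : (1 : ℝ) ≤ m := by exact_mod_cast hm
  have hK : 0 < K := by positivity
  have hp : 1 ≤ p := by rw [le_div_iff₀ (by positivity)]; linarith
  have hexp : (p - 1) * q = 1 - q := by simp only [p, q]; field_simp
  have hnorm : ‖L‖ ≤ m ^ m / K * S := by
    simpa using opNorm_le_card_pow_div_factorial_mul_of_symmetric L
      (multilinearOfCoeffs_comp_perm (symmCoeffs_comp_perm a)) fun z hz => le_csSup (bddAbove_norm_sum_mul_prod_pow _ a)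
        ⟨z, fun k => (norm_le_pi_norm z k).trans hz, by
          rw [multilinearOfCoeffs_symmCoeffs_apply_diag]⟩
  have hBH := h n L
  simp_rw [L, multilinearOfCoeffs_apply_single] at hBH
  calc (∑ α ∈ Nat.antidiagonalTuple n m, ‖a α‖ ^ p) ^ q
      ≤ (K ^ (p - 1) * ∑ i : Fin m → Fin n, ‖symmCoeffs a i‖ ^ p) ^ q := by
        gcongr
        exact sum_norm_rpow_le_mul_sum_norm_symmCoeffs_rpow a hp
    _ = K ^ (1 - q) * (∑ i : Fin m → Fin n, ‖symmCoeffs a i‖ ^ p) ^ q := by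
        rw [Real.mul_rpow (by positivity) (by positivity), ← Real.rpow_mul hK.le, hexp]
    _ ≤ K ^ (1 - q) * (C * (m ^ m / K * S)) := by
        gcongr
        exact hBH.trans (mul_le_mul_of_nonneg_left hnorm (by linarith))
    _ = C * m ^ m / K ^ q * S := by
        rw [Real.rpow_sub hK, Real.rpow_one]
        field_simp
end

section
/- (Bohr's power series theorem) Suppose the power series Σ_{k=0}^∞ c_k z^k (with complex coefficients c_k) converges for every z in the open unit disk and satisfies |Σ_{k=0}^∞ c_k z^k| < 1 whenever |z| < 1. Then Σ_{k=0}^∞ |c_k| |z|^k < 1 whenever |z| < 1/3. Moreover, the radius 1/3 is best possible: for every r > 1/3 there exists a power series Σ c_k z^k converging on the unit disk with |Σ c_k z^k| < 1 for |z| < 1 but with Σ |c_k| |z|^k ≥ 1 for some z with |z| < r. -/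
/-!
Wiener's inequality: if `f = Σ c_k z^k` maps the unit disk into the closed unit disk, then
`|c_k| ≤ 2 (1 - |c_0|)` for `k ≥ 1`. Rotating `f` so that `c_0 ≥ 0`, the function
`1 - Re f(r e^{iθ})` is nonnegative; integrating it against `e^{-ikθ}` and bounding the result
by its total mass gives `r^k |c_k| ≤ 2 (1 - |c_0|)`, and we let `r → 1`. Hence for `ρ < 1/3`,
`Σ |c_k| ρ^k ≤ |c_0| + 2 (1 - |c_0|) ρ / (1 - ρ) < |c_0| + (1 - |c_0|) = 1`.

For sharpness, the disk automorphism `(a - z) / (1 - a z)` with `0 < a < 1` has majorant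
`a + (1 - a²) ρ / (1 - a ρ)`, which equals `1` at `ρ = 1 / (1 + 2a)`, and `1 / (1 + 2a) → 1/3`
as `a → 1`.
-/

open Complex Real Filter Topology
open scoped ComplexConjugate

theorem summable_norm_mul_pow_of_summable_mul_pow {𝕜 : Type*} [NormedDivisionRing 𝕜]
    {c : ℕ → 𝕜} {z : 𝕜} (hs : Summable fun k => c k * z ^ k) {ρ : ℝ} (hρ0 : 0 ≤ ρ)
    (hρz : ρ < ‖z‖) : Summable fun k => ‖c k‖ * ρ ^ k := by
  have hz : 0 < ‖z‖ := hρ0.trans_lt hρz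
  have hbdd : ∀ᶠ k in atTop, ‖c k * z ^ k‖ ≤ 1 :=
    hs.tendsto_atTop_zero.norm.eventually (ge_mem_nhds (by simp))
  refine .of_norm_bounded_eventually_nat (summable_geometric_of_lt_one (by positivity)
    ((div_lt_one hz).2 hρz)) ?_
  filter_upwards [hbdd] with k hk
  rw [norm_mul, norm_pow] at hk
  calc ‖‖c k‖ * ρ ^ k‖ = ‖c k‖ * ‖z‖ ^ k * (ρ / ‖z‖) ^ k := by
        rw [Real.norm_of_nonneg (by positivity), div_pow, mul_assoc,
          mul_div_cancel₀ _ (by positivity)]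
    _ ≤ (ρ / ‖z‖) ^ k := mul_le_of_le_one_left (by positivity) hk

theorem integral_exp_int_mul_I (n : ℤ) :
    ∫ θ in (0 : ℝ)..2 * π, cexp (n * θ * I) = if n = 0 then (2 * π : ℂ) else 0 := by
  split_ifs with hn
  · simp [hn]
  have hc : (n : ℂ) * I ≠ 0 := by simp [hn, I_ne_zero]
  simp_rw [mul_right_comm _ _ I]
  rw [integral_exp_mul_complex hc, div_eq_zero_iff, sub_eq_zero]
  left
  push_cast
  rw [show (n : ℂ) * I * (2 * π) = n * (2 * π * I) by ring, exp_int_mul_two_pi_mul_I]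
  simp

noncomputable def trigSeries (a : ℕ → ℂ) (θ : ℝ) : ℂ :=
  ∑' m, a m * cexp (m * θ * I)

section TrigSeries

variable {a : ℕ → ℂ}

theorem continuous_trigSeries (ha : Summable fun m => ‖a m‖) : Continuous (trigSeries a) :=
  continuous_tsum (fun m => by fun_prop) ha fun m θ => by simp [norm_exp]

theorem hasSum_integral_trigSeries_mul_exp (ha : Summable fun m => ‖a m‖) (d : ℤ) :
    HasSum (fun m : ℕ => a m * ∫ θ in (0 : ℝ)..2 * π, cexp ((m + d : ℤ) * θ * I))
      (∫ θ in (0 : ℝ)..2 * π, trigSeries a θ * cexp (d * θ * I)) := by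
  have hexp : ∀ (m : ℕ) (θ : ℝ),
      cexp (m * θ * I) * cexp (d * θ * I) = cexp ((m + d : ℤ) * θ * I) := fun m θ => by
    rw [← Complex.exp_add]; push_cast; ring_nf
  simp_rw [← intervalIntegral.integral_const_mul]
  refine intervalIntegral.hasSum_integral_of_dominated_convergence
    (F := fun m θ => a m * cexp ((m + d : ℤ) * θ * I)) (fun m _ => ‖a m‖)
    (fun m => (by fun_prop : Continuous _).aestronglyMeasurable)
    (fun m => .of_forall fun θ _ => by simp [norm_exp])
    (.of_forall fun _ _ => ha) intervalIntegrable_const (.of_forall fun θ _ => ?_)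
  have hs : Summable fun m => a m * cexp (m * θ * I) :=
    .of_norm_bounded ha fun m => by simp [norm_exp]
  simp_rw [← hexp, ← mul_assoc]
  exact hs.hasSum.mul_right _

theorem integral_trigSeries_mul_exp_neg (ha : Summable fun m => ‖a m‖) (k : ℕ) :
    ∫ θ in (0 : ℝ)..2 * π, trigSeries a θ * cexp (-(k * θ * I)) = 2 * π * a k := by
  have h := hasSum_integral_trigSeries_mul_exp ha (-k)
  simp only [integral_exp_int_mul_I, add_neg_eq_zero, Nat.cast_inj, mul_ite, mul_zero,
    Int.cast_neg, Int.cast_natCast, neg_mul] at h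
  rw [h.unique (hasSum_single k fun m hm => if_neg hm), if_pos rfl, mul_comm]

theorem integral_trigSeries_mul_exp_of_ne_zero (ha : Summable fun m => ‖a m‖) {k : ℕ}
    (hk : k ≠ 0) : ∫ θ in (0 : ℝ)..2 * π, trigSeries a θ * cexp (k * θ * I) = 0 := by
  have h := hasSum_integral_trigSeries_mul_exp ha k
  simp only [integral_exp_int_mul_I, Int.cast_natCast] at h
  refine h.unique (hasSum_zero.congr_fun fun m => ?_)
  rw [if_neg (by omega), mul_zero]

theorem integral_re_trigSeries (ha : Summable fun m => ‖a m‖) :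
    ∫ θ in (0 : ℝ)..2 * π, (trigSeries a θ).re = 2 * π * (a 0).re := by
  have h := intervalIntegral.intervalIntegral_re
    ((continuous_trigSeries ha).intervalIntegrable (μ := MeasureTheory.volume) 0 (2 * π))
  have h0 : ∫ θ in (0 : ℝ)..2 * π, trigSeries a θ = 2 * π * a 0 := by
    simpa using integral_trigSeries_mul_exp_neg ha 0
  simp only [RCLike.re_to_complex] at h
  rw [h, h0]
  simp

/-- Since `M - Re T = M - (T + conj T) / 2`, only the `k`-th coefficient of `T` survives. -/
theorem integral_sub_re_trigSeries_mul_exp_neg (ha : Summable fun m => ‖a m‖) (M : ℝ) {k : ℕ}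
    (hk : k ≠ 0) :
    ∫ θ in (0 : ℝ)..2 * π, ((M - (trigSeries a θ).re : ℝ) : ℂ) * cexp (-(k * θ * I)) =
      -(π * a k) := by
  have hexp : ∫ θ in (0 : ℝ)..2 * π, cexp (-(k * θ * I)) = 0 := by
    simpa [hk, neg_mul] using integral_exp_int_mul_I (-k)
  have hpointwise : ∀ θ : ℝ, ((M - (trigSeries a θ).re : ℝ) : ℂ) * cexp (-(k * θ * I)) =
      M * cexp (-(k * θ * I)) - 2⁻¹ * (trigSeries a θ * cexp (-(k * θ * I))) -
        2⁻¹ * conj (trigSeries a θ * cexp (k * θ * I)) := fun θ => by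
    have hconj : conj (cexp (k * θ * I)) = cexp (-(k * θ * I)) := by
      rw [← exp_conj]; simp
    have hre := add_conj (trigSeries a θ)
    rw [map_mul, hconj]
    push_cast at hre ⊢
    linear_combination (2⁻¹ * cexp (-(k * θ * I))) * hre
  have hT : Continuous (trigSeries a) := continuous_trigSeries ha
  simp_rw [hpointwise]
  rw [intervalIntegral.integral_sub, intervalIntegral.integral_sub,
    intervalIntegral.integral_const_mul, intervalIntegral.integral_const_mul,
    intervalIntegral.integral_const_mul, intervalIntegral.intervalIntegral_conj, hexp,
    integral_trigSeries_mul_exp_neg ha, integral_trigSeries_mul_exp_of_ne_zero ha hk]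
  · simp only [mul_zero, map_zero, sub_zero, zero_sub]
    ring
  all_goals exact Continuous.intervalIntegrable (by fun_prop) _ _

theorem norm_le_two_mul_sub_re_of_re_trigSeries_le (ha : Summable fun m => ‖a m‖) {M : ℝ}
    (hM : ∀ θ, (trigSeries a θ).re ≤ M) {k : ℕ} (hk : k ≠ 0) :
    ‖a k‖ ≤ 2 * (M - (a 0).re) := by
  refine le_of_mul_le_mul_left ?_ pi_pos
  calc π * ‖a k‖
      = ‖∫ θ in (0 : ℝ)..2 * π, ((M - (trigSeries a θ).re : ℝ) : ℂ) * cexp (-(k * θ * I))‖ := by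
        rw [integral_sub_re_trigSeries_mul_exp_neg ha M hk, norm_neg, norm_mul, norm_real,
          Real.norm_of_nonneg pi_pos.le]
    _ ≤ ∫ θ in (0 : ℝ)..2 * π, ‖((M - (trigSeries a θ).re : ℝ) : ℂ) * cexp (-(k * θ * I))‖ :=
        intervalIntegral.norm_integral_le_integral_norm (by positivity)
    _ = ∫ θ in (0 : ℝ)..2 * π, (M - (trigSeries a θ).re) := by
        refine intervalIntegral.integral_congr fun θ _ => ?_
        rw [norm_mul, norm_real, Real.norm_of_nonneg (sub_nonneg.2 (hM θ))]
        simp [norm_exp]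
    _ = π * (2 * (M - (a 0).re)) := by
        rw [intervalIntegral.integral_sub intervalIntegrable_const
          ((continuous_re.comp (continuous_trigSeries ha)).intervalIntegrable
            (u := fun θ => (trigSeries a θ).re) _ _),
          integral_re_trigSeries ha]
        simp
        ring

end TrigSeries

theorem norm_coeff_mul_pow_le_two_mul_one_sub_norm_coeff_zero {c : ℕ → ℂ}
    (hc : ∀ z : ℂ, ‖z‖ < 1 → Summable fun k => c k * z ^ k)
    (hf : ∀ z : ℂ, ‖z‖ < 1 → ‖∑' k, c k * z ^ k‖ ≤ 1) {k : ℕ} (hk : k ≠ 0) {r : ℝ}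
    (hr0 : 0 ≤ r) (hr1 : r < 1) :
    ‖c k‖ * r ^ k ≤ 2 * (1 - ‖c 0‖) := by
  obtain ⟨u, hu, hu0⟩ : ∃ u : ℂ, ‖u‖ = 1 ∧ u * c 0 = ‖c 0‖ := by
    refine ⟨cexp (↑(-(c 0).arg) * I), norm_exp_ofReal_mul_I _, ?_⟩
    conv_lhs => rw [← norm_mul_exp_arg_mul_I (c 0)]
    rw [mul_left_comm, ← Complex.exp_add]
    simp
  have hsum : Summable fun m => ‖u * c m * r ^ m‖ := by
    refine (summable_norm_mul_pow_of_summable_mul_pow (hc ((1 + r) / 2 : ℝ) ?_) hr0 ?_).congr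
      fun m => ?_
    · rw [norm_real, Real.norm_of_nonneg (by positivity)]; linarith
    · rw [norm_real, Real.norm_of_nonneg (by positivity)]; linarith
    · simp [hu, abs_of_nonneg hr0]
  have hre : ∀ θ, (trigSeries (fun m => u * c m * r ^ m) θ).re ≤ 1 := fun θ => by
    have hz : ‖(r : ℂ) * cexp (θ * I)‖ < 1 := by
      rwa [norm_mul, norm_exp_ofReal_mul_I, norm_real, mul_one, Real.norm_of_nonneg hr0]
    have hseries : trigSeries (fun m => u * c m * r ^ m) θ =
        u * ∑' m, c m * (r * cexp (θ * I)) ^ m := by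
      rw [trigSeries, ← tsum_mul_left]
      congr 1 with m
      rw [mul_pow, ← Complex.exp_nat_mul]
      ring_nf
    calc _ ≤ ‖trigSeries (fun m => u * c m * r ^ m) θ‖ := re_le_norm _
      _ ≤ 1 := by rw [hseries, norm_mul, hu, one_mul]; exact hf _ hz
  simpa [hu, abs_of_nonneg hr0, hu0] using norm_le_two_mul_sub_re_of_re_trigSeries_le hsum hre hk

theorem norm_coeff_le_two_mul_one_sub_norm_coeff_zero {c : ℕ → ℂ}
    (hc : ∀ z : ℂ, ‖z‖ < 1 → Summable fun k => c k * z ^ k)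
    (hf : ∀ z : ℂ, ‖z‖ < 1 → ‖∑' k, c k * z ^ k‖ ≤ 1) {k : ℕ} (hk : k ≠ 0) :
    ‖c k‖ ≤ 2 * (1 - ‖c 0‖) := by
  have hlim : Tendsto (fun r : ℝ => ‖c k‖ * r ^ k) (𝓝[<] 1) (𝓝 ‖c k‖) :=
    ((continuous_const.mul (continuous_pow k)).tendsto' 1 _ (by simp)).mono_left
      nhdsWithin_le_nhds
  exact le_of_tendsto hlim <| eventually_of_mem (Ioo_mem_nhdsLT one_pos) fun r hr =>
    norm_coeff_mul_pow_le_two_mul_one_sub_norm_coeff_zero hc hf hk hr.1.le hr.2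

theorem summable_and_tsum_norm_mul_pow_lt_one {c : ℕ → ℂ} (h0 : ‖c 0‖ < 1)
    (hk : ∀ k ≠ 0, ‖c k‖ ≤ 2 * (1 - ‖c 0‖)) {ρ : ℝ} (hρ0 : 0 ≤ ρ) (hρ : ρ < 1 / 3) :
    Summable (fun k => ‖c k‖ * ρ ^ k) ∧ ∑' k, ‖c k‖ * ρ ^ k < 1 := by
  set a := ‖c 0‖
  have hρ1 : ρ < 1 := by linarith
  have hgeom : HasSum (fun k => 2 * (1 - a) * ρ ^ (k + 1)) (2 * (1 - a) * ρ * (1 - ρ)⁻¹) := by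
    simpa only [pow_succ', mul_assoc] using
      (hasSum_geometric_of_lt_one hρ0 hρ1).mul_left (2 * (1 - a) * ρ)
  have htail_le : ∀ k, ‖c (k + 1)‖ * ρ ^ (k + 1) ≤ 2 * (1 - a) * ρ ^ (k + 1) := fun k =>
    mul_le_mul_of_nonneg_right (hk _ k.succ_ne_zero) (by positivity)
  have htail : Summable fun k => ‖c (k + 1)‖ * ρ ^ (k + 1) :=
    .of_nonneg_of_le (fun _ => by positivity) htail_le hgeom.summable
  have hs : Summable fun k => ‖c k‖ * ρ ^ k := (summable_nat_add_iff 1).1 htail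
  have hratio : 2 * ρ * (1 - ρ)⁻¹ < 1 := by
    rw [← div_eq_mul_inv, div_lt_one (by linarith)]; linarith
  refine ⟨hs, ?_⟩
  calc ∑' k, ‖c k‖ * ρ ^ k = a + ∑' k, ‖c (k + 1)‖ * ρ ^ (k + 1) := by
        simpa using hs.tsum_eq_zero_add
    _ ≤ a + 2 * (1 - a) * ρ * (1 - ρ)⁻¹ := by
        gcongr; exact hasSum_le htail_le htail.hasSum hgeom
    _ < 1 := by nlinarith

def blaschkeCoeff (a : ℂ) : ℕ → ℂ
  | 0 => a
  | k + 1 => (a ^ 2 - 1) * a ^ k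

theorem hasSum_blaschkeCoeff_mul_pow {a z : ℂ} (h : ‖a * z‖ < 1) :
    HasSum (fun k => blaschkeCoeff a k * z ^ k) ((a - z) / (1 - a * z)) := by
  have hne : 1 - a * z ≠ 0 := sub_ne_zero.2 fun h1 => by simp [← h1] at h
  have hterm : ∀ k, blaschkeCoeff a (k + 1) * z ^ (k + 1) = (a ^ 2 - 1) * z * (a * z) ^ k :=
      fun k => by simp only [blaschkeCoeff]; ring
  have htail : HasSum (fun k => blaschkeCoeff a (k + 1) * z ^ (k + 1))
      ((a ^ 2 - 1) * z * (1 - a * z)⁻¹) := by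
    simp only [hterm]
    exact (hasSum_geometric_of_norm_lt_one h).mul_left ((a ^ 2 - 1) * z)
  have hsum : blaschkeCoeff a 0 * z ^ 0 + (a ^ 2 - 1) * z * (1 - a * z)⁻¹ =
      (a - z) / (1 - a * z) := by
    simp only [blaschkeCoeff]
    field_simp
    ring
  rw [← hsum]
  exact HasSum.zero_add (f := fun k => blaschkeCoeff a k * z ^ k) htail

theorem norm_sub_div_one_sub_mul_lt_one {a : ℝ} {z : ℂ} (ha : |a| < 1) (hz : ‖z‖ < 1) :
    ‖((a : ℂ) - z) / (1 - a * z)‖ < 1 := by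
  have hsq : ‖(a : ℂ) - z‖ ^ 2 < ‖1 - (a : ℂ) * z‖ ^ 2 := by
    have hz2 : z.re ^ 2 + z.im ^ 2 < 1 := by
      rw [← sq_lt_one_iff_abs_lt_one] at ha
      nlinarith [Complex.sq_norm z, normSq_apply z, norm_nonneg z]
    rw [← sq_lt_one_iff_abs_lt_one] at ha
    simp only [Complex.sq_norm, normSq_apply, sub_re, sub_im, mul_re, mul_im, ofReal_re, ofReal_im,
      one_re, one_im]
    nlinarith [mul_pos (sub_pos.2 ha) (sub_pos.2 hz2)]
  have hlt := lt_of_pow_lt_pow_left₀ 2 (norm_nonneg _) hsq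
  rw [norm_div, div_lt_one ((norm_nonneg _).trans_lt hlt)]
  exact hlt

theorem hasSum_norm_blaschkeCoeff_mul_pow {a s : ℝ} (ha0 : 0 ≤ a) (ha1 : a ≤ 1) (hs0 : 0 ≤ s)
    (has : a * s < 1) :
    HasSum (fun k => ‖blaschkeCoeff a k‖ * s ^ k) (a + (1 - a ^ 2) * s * (1 - a * s)⁻¹) := by
  have htail : HasSum (fun k => ‖blaschkeCoeff a (k + 1)‖ * s ^ (k + 1))
      ((1 - a ^ 2) * s * (1 - a * s)⁻¹) := by
    have hterm : ∀ k, ‖blaschkeCoeff a (k + 1)‖ * s ^ (k + 1) = (1 - a ^ 2) * s * (a * s) ^ k :=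
      fun k => by
        rw [blaschkeCoeff, show ((a : ℂ) ^ 2 - 1) * a ^ k = ((-((1 - a ^ 2) * a ^ k) : ℝ) : ℂ) by
          push_cast; ring, norm_real, Real.norm_eq_abs, abs_neg,
          abs_of_nonneg (mul_nonneg (by nlinarith) (by positivity))]
        ring
    simpa only [hterm] using
      (hasSum_geometric_of_lt_one (by positivity) has).mul_left ((1 - a ^ 2) * s)
  simpa [blaschkeCoeff, abs_of_nonneg ha0] using
    HasSum.zero_add (f := fun k => ‖blaschkeCoeff a k‖ * s ^ k) htail

theorem exists_bohr_extremal (r : ℝ) (hr : 1 / 3 < r) :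
    ∃ c : ℕ → ℂ,
      (∀ z : ℂ, ‖z‖ < 1 → Summable (fun k => c k * z ^ k) ∧ ‖∑' k : ℕ, c k * z ^ k‖ < 1) ∧
      ∃ z : ℂ, ‖z‖ < r ∧ 1 ≤ ∑' k : ℕ, ‖c k‖ * ‖z‖ ^ k := by
  obtain ⟨a, ha, ha1⟩ := exists_between (show max 0 ((1 - r) / (2 * r)) < 1 from
    max_lt one_pos (by rw [div_lt_one (by linarith)]; linarith))
  obtain ⟨ha0, har⟩ := max_lt_iff.1 ha
  rw [div_lt_iff₀ (by linarith)] at har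
  set s := (1 + 2 * a)⁻¹ with hs
  have hs0 : 0 < s := by positivity
  have hsr : s < r := by rw [hs, inv_lt_iff_one_lt_mul₀ (by positivity)]; linarith
  have has : a * s < 1 := by rw [hs, ← div_eq_mul_inv, div_lt_one (by positivity)]; linarith
  refine ⟨blaschkeCoeff a, fun z hz => ?_, s, ?_, ?_⟩
  · have haz : ‖(a : ℂ) * z‖ < 1 := by
      rw [norm_mul, norm_real, Real.norm_of_nonneg ha0.le]
      nlinarith [norm_nonneg z]
    have h := hasSum_blaschkeCoeff_mul_pow haz
    exact ⟨h.summable, h.tsum_eq ▸ norm_sub_div_one_sub_mul_lt_one (abs_lt.2 ⟨by linarith, ha1⟩) hz⟩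
  · rwa [norm_real, Real.norm_of_nonneg hs0.le]
  · have hval : a + (1 - a ^ 2) * s * (1 - a * s)⁻¹ = 1 := by
      have h1a : 1 + a ≠ 0 := by positivity
      have has' : 1 - a * s = (1 + a) * s := by rw [hs]; field_simp; ring
      rw [has', mul_inv, hs, inv_inv]
      field_simp
      ring
    rw [norm_real, Real.norm_of_nonneg hs0.le,
      (hasSum_norm_blaschkeCoeff_mul_pow ha0.le ha1.le hs0.le has).tsum_eq, hval]

/-- **Bohr's power series theorem.** If the power series `Σ c_k z^k` converges on the open
unit disk and `|Σ c_k z^k| < 1` whenever `|z| < 1`, then `Σ |c_k| |z|^k < 1` whenever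
`|z| < 1/3`. Moreover, the radius `1/3` is best possible: for every `r > 1/3` there is a
power series converging on the unit disk with modulus `< 1` there, but whose majorant series
reaches `1` at some point of modulus `< r`. -/
theorem bohr_power_series_theorem :
    (∀ c : ℕ → ℂ,
      (∀ z : ℂ, ‖z‖ < 1 → Summable (fun k => c k * z ^ k) ∧ ‖∑' k : ℕ, c k * z ^ k‖ < 1) →
      ∀ z : ℂ, ‖z‖ < 1 / 3 →
        Summable (fun k : ℕ => ‖c k‖ * ‖z‖ ^ k) ∧ (∑' k : ℕ, ‖c k‖ * ‖z‖ ^ k) < 1) ∧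
    (∀ r : ℝ, 1 / 3 < r →
      ∃ c : ℕ → ℂ,
        (∀ z : ℂ, ‖z‖ < 1 → Summable (fun k => c k * z ^ k) ∧ ‖∑' k : ℕ, c k * z ^ k‖ < 1) ∧
        ∃ z : ℂ, ‖z‖ < r ∧ 1 ≤ ∑' k : ℕ, ‖c k‖ * ‖z‖ ^ k) := by
  refine ⟨fun c H z hz => ?_, exists_bohr_extremal⟩
  have hc0 : ‖c 0‖ < 1 := by
    have h0 := (H 0 (by simp)).2
    rwa [tsum_eq_single 0 fun k hk => by simp [hk], pow_zero, mul_one] at h0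
  exact summable_and_tsum_norm_mul_pow_lt_one hc0
    (fun k hk => norm_coeff_le_two_mul_one_sub_norm_coeff_zero (fun w hw => (H w hw).1)
      (fun w hw => (H w hw).2.le) hk) (norm_nonneg z) hz
end
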